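/- arXiv:2010.06401 — 11 statements merged into one kernel-verified Lean document; each statement's English description precedes it below -/
import Mathlib

section
/- Let σ be a permutation of [n] and let k = #{r ∈ [m] : σ(i_r) = j_r}. Then ∑_{r=1}^m P^[2]_σ((i_r,j_r),(i_r,j_r)) − ∑_{1≤r<s≤m} P^[2]_σ((i_r,j_r),(i_s,j_s)) = k − k(k−1)/2 (as real numbers). Consequently, P^[2]_σ satisfies the QAP4 inequality with equality (its left-hand side equals 1) if and only if σ ∈ S_1 ∪ S_2. -/
/-! With `x r ∈ {0, 1}` the indicator of `σ (i r) = j r`, the entries of `P^[2]_σ` involved are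
`x r * x s`. Since `x r ^ 2 = x r`, the diagonal sum is `∑ x r = k`, and the sum over `r < s` is
`((∑ x r) ^ 2 - ∑ x r ^ 2) / 2 = (k ^ 2 - k) / 2`. Finally `k - k (k - 1) / 2 = 1` is
`(k - 1) (k - 2) = 0`. -/

open Finset

/-- The matrix `P^[2]_σ`: entry at `((i,j),(k,l))` is `P_σ(i,j) · P_σ(k,l)`, where
`P_σ` is the permutation matrix of `σ`. -/
noncomputable def permMat2 {n : ℕ} (σ : Equiv.Perm (Fin n)) :
    (Fin n × Fin n) → (Fin n × Fin n) → ℝ :=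
  fun p q => (if σ p.1 = p.2 then (1 : ℝ) else 0) * (if σ q.1 = q.2 then (1 : ℝ) else 0)

/-- `Sk i j k`: the set of permutations `σ` such that `σ (i r) = j r` holds for exactly `k`
indices `r`. -/
def Sk {n m : ℕ} (i j : Fin m → Fin n) (k : ℕ) : Set (Equiv.Perm (Fin n)) :=
  {σ | (Finset.univ.filter (fun r : Fin m => σ (i r) = j r)).card = k}

theorem Finset.two_mul_sum_sum_ite_lt_mul {α R : Type*} [LinearOrder α] [CommRing R]
    (s : Finset α) (x : α → R) :
    2 * ∑ r ∈ s, ∑ t ∈ s, (if r < t then x r * x t else 0)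
      = (∑ r ∈ s, x r) ^ 2 - ∑ r ∈ s, x r ^ 2 := by
  have hswap : ∑ r ∈ s, ∑ t ∈ s, (if t < r then x r * x t else 0)
      = ∑ r ∈ s, ∑ t ∈ s, (if r < t then x r * x t else 0) := by
    rw [sum_comm]
    exact sum_congr rfl fun _ _ => sum_congr rfl fun _ _ => by rw [mul_comm]
  have hsplit : ∀ r t, x r * x t = (if r < t then x r * x t else 0)
      + (if t < r then x r * x t else 0) + (if r = t then x r * x t else 0) := by
    intro r t
    rcases lt_trichotomy r t with h | rfl | h
    · simp [h, h.ne, h.not_gt]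
    · simp
    · simp [h, h.ne', h.not_gt]
  have hdiag : ∑ r ∈ s, ∑ t ∈ s, (if r = t then x r * x t else 0) = ∑ r ∈ s, x r ^ 2 := by
    refine sum_congr rfl fun r hr => ?_
    rw [sum_ite_eq, if_pos hr, sq]
  have hexpand : ∑ r ∈ s, ∑ t ∈ s, x r * x t = ∑ r ∈ s, ∑ t ∈ s, (if r < t then x r * x t else 0)
      + ∑ r ∈ s, ∑ t ∈ s, (if t < r then x r * x t else 0)
      + ∑ r ∈ s, ∑ t ∈ s, (if r = t then x r * x t else 0) := by
    simp only [← sum_add_distrib, ← hsplit]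
  rw [sq, sum_mul_sum, hexpand, hswap, hdiag]
  ring

theorem permMat2_self {n : ℕ} (σ : Equiv.Perm (Fin n)) (p : Fin n × Fin n) :
    permMat2 σ p p = if σ p.1 = p.2 then 1 else 0 := by
  unfold permMat2
  split_ifs <;> simp

theorem qap4_lhs_permMat2 {n m : ℕ} (i j : Fin m → Fin n) (σ : Equiv.Perm (Fin n)) :
    ∑ r : Fin m, permMat2 σ (i r, j r) (i r, j r)
        - ∑ r : Fin m, ∑ s : Fin m, (if r < s then permMat2 σ (i r, j r) (i s, j s) else 0)
      = (#{r | σ (i r) = j r} : ℝ) - #{r | σ (i r) = j r} * (#{r | σ (i r) = j r} - 1) / 2 := by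
  set x : Fin m → ℝ := fun r => if σ (i r) = j r then 1 else 0
  have hsum : ∑ r, x r = #{r | σ (i r) = j r} := by
    simp only [x, sum_boole]
  have hsq : ∑ r, x r ^ 2 = ∑ r, x r :=
    sum_congr rfl fun r _ => by simp only [x]; split_ifs <;> norm_num
  have hpairs := two_mul_sum_sum_ite_lt_mul univ x
  simp only [permMat2_self]
  change ∑ r, x r - ∑ r, ∑ s, (if r < s then x r * x s else 0) = _
  rw [hsq, hsum] at hpairs
  rw [hsum]
  linarith

theorem natCast_sub_mul_sub_one_div_two_eq_one_iff (k : ℕ) :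
    (k : ℝ) - k * (k - 1) / 2 = 1 ↔ k = 1 ∨ k = 2 := by
  have hfactor : (k : ℝ) - k * (k - 1) / 2 - 1 = -((k - 1) * (k - 2)) / 2 := by ring
  rw [← sub_eq_zero, hfactor]
  simp only [div_eq_zero_iff, neg_eq_zero, mul_eq_zero, sub_eq_zero, Nat.cast_eq_one,
    OfNat.ofNat_ne_zero, or_false]
  norm_cast

theorem stmt0_general {n m : ℕ}
    (i j : Fin m → Fin n)
    (σ : Equiv.Perm (Fin n))
    (k : ℕ) (hk : k = (Finset.univ.filter (fun r : Fin m => σ (i r) = j r)).card) :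
    (∑ r : Fin m, permMat2 σ (i r, j r) (i r, j r)
        - ∑ r : Fin m, ∑ s : Fin m, if r < s then permMat2 σ (i r, j r) (i s, j s) else 0)
      = (k : ℝ) - (k : ℝ) * ((k : ℝ) - 1) / 2
    ∧ ((∑ r : Fin m, permMat2 σ (i r, j r) (i r, j r)
        - ∑ r : Fin m, ∑ s : Fin m, if r < s then permMat2 σ (i r, j r) (i s, j s) else 0) = 1
      ↔ σ ∈ Sk i j 1 ∪ Sk i j 2) := by
  subst hk
  have hlhs := qap4_lhs_permMat2 i j σ
  refine ⟨hlhs, ?_⟩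
  rw [hlhs, natCast_sub_mul_sub_one_div_two_eq_one_iff]
  rfl

theorem stmt0 {n m : ℕ} (hmn : m ≤ n)
    (i j : Fin m → Fin n) (hi : Function.Injective i) (hj : Function.Injective j)
    (σ : Equiv.Perm (Fin n))
    (k : ℕ) (hk : k = (Finset.univ.filter (fun r : Fin m => σ (i r) = j r)).card) :
    (∑ r : Fin m, permMat2 σ (i r, j r) (i r, j r)
        - ∑ r : Fin m, ∑ s : Fin m, if r < s then permMat2 σ (i r, j r) (i s, j s) else 0)
      = (k : ℝ) - (k : ℝ) * ((k : ℝ) - 1) / 2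
    ∧ ((∑ r : Fin m, permMat2 σ (i r, j r) (i r, j r)
        - ∑ r : Fin m, ∑ s : Fin m, if r < s then permMat2 σ (i r, j r) (i s, j s) else 0) = 1
      ↔ σ ∈ Sk i j 1 ∪ Sk i j 2) :=
  stmt0_general i j σ k hk
end

section
/- For every permutation σ of [n], ∑_{r=1}^m P^[2]_σ((i_r,j_r),(i_r,j_r)) − ∑_{1≤r<s≤m} P^[2]_σ((i_r,j_r),(i_s,j_s)) ≤ 1; that is, the QAP4 inequality is valid for every vertex P^[2]_σ of the QAP-polytope. -/
/-! A vertex `P^[2]_σ` restricted to the pairs `(i_r, j_r)` is `x xᵀ` for the 0/1 vector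
`x_r = [σ(i_r) = j_r]`, so with `k = ∑ x_r` the left side of QAP4 is `k - k(k-1)/2`,
which is at most `1` because `(k - 1)(k - 2) ≥ 0` for every natural number `k`. -/

open Finset

theorem sq_sum_eq_two_mul_sum_lt_add_sum_sq {ι R : Type*} [Fintype ι] [LinearOrder ι]
    [CommSemiring R] (x : ι → R) :
    (∑ r, x r) ^ 2
      = 2 * ∑ r, ∑ s, (if r < s then x r * x s else 0) + ∑ r, x r ^ 2 := by
  have split_term : ∀ r s, x r * x s
      = (if r < s then x r * x s else 0) + (if s < r then x s * x r else 0)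
        + (if r = s then x r ^ 2 else 0) := by
    intro r s
    rcases lt_trichotomy r s with h | rfl | h
    · simp [h, h.ne, asymm h]
    · simp only [lt_irrefl, if_false, if_true, zero_add, sq]
    · simp [h, h.ne', asymm h, mul_comm]
  rw [sq, sum_mul_sum, sum_congr rfl fun r _ => sum_congr rfl fun s _ => split_term r s]
  simp only [sum_add_distrib, sum_ite_eq, mem_univ, if_true]
  rw [sum_comm (f := fun r s => if s < r then x s * x r else 0), two_mul]

theorem sum_sub_sum_lt_mul_le_one {ι : Type*} [Fintype ι] [LinearOrder ι] (x : ι → ℝ)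
    (hx : ∀ r, x r = 0 ∨ x r = 1) :
    ∑ r, x r - ∑ r, ∑ s, (if r < s then x r * x s else 0) ≤ 1 := by
  have x_sq : ∀ r, x r ^ 2 = x r := fun r => by rcases hx r with h | h <;> simp [h]
  obtain ⟨k, hk⟩ : ∃ k : ℕ, ∑ r, x r = k := ⟨#{r | x r = 1}, by
    rw [← sum_boole]; exact sum_congr rfl fun r _ => by rcases hx r with h | h <;> simp [h]⟩
  have hsq := sq_sum_eq_two_mul_sum_lt_add_sum_sq x
  simp only [x_sq, hk] at hsq ⊢
  have hk_prod : 0 ≤ ((k : ℝ) - 1) * (k - 2) := by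
    rcases k with _ | _ | k <;> push_cast <;> nlinarith
  nlinarith

theorem stmt1_general {n m : ℕ}
    (i j : Fin m → Fin n)
    (σ : Equiv.Perm (Fin n)) :
    (∑ r : Fin m, permMat2 σ (i r, j r) (i r, j r)
        - ∑ r : Fin m, ∑ s : Fin m, if r < s then permMat2 σ (i r, j r) (i s, j s) else 0)
      ≤ 1 := by
  set x : Fin m → ℝ := fun r => if σ (i r) = j r then 1 else 0
  have hdiag : ∀ r, permMat2 σ (i r, j r) (i r, j r) = x r := fun r => by
    by_cases h : σ (i r) = j r <;> simp [permMat2, x, h]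
  have hoff : ∀ r s, permMat2 σ (i r, j r) (i s, j s) = x r * x s := fun _ _ => rfl
  simp only [hdiag, hoff]
  exact sum_sub_sum_lt_mul_le_one x fun r => by by_cases h : σ (i r) = j r <;> simp [x, h]

theorem stmt1 {n m : ℕ} (hmn : m ≤ n)
    (i j : Fin m → Fin n) (hi : Function.Injective i) (hj : Function.Injective j)
    (σ : Equiv.Perm (Fin n)) :
    (∑ r : Fin m, permMat2 σ (i r, j r) (i r, j r)
        - ∑ r : Fin m, ∑ s : Fin m, if r < s then permMat2 σ (i r, j r) (i s, j s) else 0)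
      ≤ 1 :=
  stmt1_general i j σ
end

section
/- Let k_1, k_2, k_3, x, y ∈ [n] be five pairwise distinct indices. Let Σ = {σ_1,…,σ_6} be a set of six distinct permutations of [n] such that σ_a(z) = σ_b(z) for all z ∈ [n]∖{k_1,k_2,k_3} and all a, b ∈ {1,…,6} (so the six permutations differ only by permuting their values on {k_1,k_2,k_3}). For each a let σ'_a = σ_a ∘ τ, where τ is the transposition of x and y (so σ'_a swaps the values of σ_a at positions x and y), and let Σ' = {σ'_1,…,σ'_6}. Then for all i, j, k, l ∈ [n], ∑_{σ ∈ Σ ∪ Σ'} sign(σ) · P^[2]_σ((i,j),(k,l)) = 0, where sign denotes the sign of a permutation; i.e., ∑_{σ ∈ Σ ∪ Σ'} sign(σ) · P^[2]_σ is the zero matrix. -/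
open Finset

/-!
The six permutations of `Σ` are exactly the permutations agreeing with `σ₁` off
`K = {k₁, k₂, k₃}`, and likewise `Σ'` for `σ'₁`, so `Σ ∪ Σ'` is stable under right
multiplication by `swap x y` and by `swap a b` for `a, b ∈ K`. Right multiplication by a
transposition flips the sign and leaves `P^[2]_σ((i,j),(k,l))` unchanged as long as the
transposition fixes `i` and `k`, so it is a sign-reversing involution of the sum. Such a
transposition always exists: `swap x y` if `i, k ∉ {x, y}`, and otherwise one of `i, k` lies
outside `K`, leaving two points of `K` distinct from both.
-/

open Equiv Equiv.Perm
open scoped Nat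

namespace Equiv.Perm

variable {α : Type*} [DecidableEq α]

theorem ne_mul_swap_of_apply_eq {g h : Perm α} {x y : α} (hxy : x ≠ y) (hx : g x = h x) :
    g ≠ h * swap x y := by
  rintro rfl
  simp only [coe_mul, Function.comp_apply, swap_apply_left, EmbeddingLike.apply_eq_iff_eq] at hx
  exact hxy hx.symm

theorem swap_apply_notMem {K : Finset α} {x y z : α} (hx : x ∉ K) (hy : y ∉ K) (hz : z ∉ K) :
    swap x y z ∉ K := by
  rw [swap_apply_def]
  split_ifs <;> assumption

variable [Fintype α]

theorem sum_sign_mul_eq_zero_of_mul_swap_mem {R : Type*} [CommRing R] {S : Finset (Perm α)}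
    {a b : α} (hab : a ≠ b) (hS : ∀ g ∈ S, g * swap a b ∈ S) {f : Perm α → R}
    (hf : ∀ g, f (g * swap a b) = f g) :
    ∑ g ∈ S, ((sign g : ℤ) : R) * f g = 0 := by
  refine sum_involution (fun g _ => g * swap a b) (fun g _ => ?_)
    (fun g _ _ => mul_ne_left.mpr (swap_eq_one_iff.not.mpr hab)) hS
    (fun g _ => mul_swap_mul_self a b g)
  rw [hf, sign_mul, sign_swap hab]
  push_cast
  ring

theorem card_filter_forall_notMem_apply_eq (K : Finset α) (τ : Perm α) :
    #{g : Perm α | ∀ z ∉ K, g z = τ z} = (#K)! := by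
  rw [← card_perms_of_finset K]
  refine card_nbij' (τ⁻¹ * ·) (τ * ·) (fun g hg => ?_) (fun g hg => ?_) (fun g _ => by simp)
    (fun g _ => by simp)
  · simp only [coe_filter, mem_univ, true_and, Set.mem_ofPred_eq] at hg
    simp only [mem_coe, mem_perms_of_finset_iff]
    intro z hz
    by_contra hzK
    exact hz (by simp [hg z hzK])
  · simp only [mem_coe, mem_perms_of_finset_iff] at hg
    simp only [coe_filter, mem_univ, true_and, Set.mem_ofPred_eq]
    intro z hzK
    rw [coe_mul, Function.comp_apply, not_imp_comm.mp hg hzK]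

theorem image_eq_filter_forall_notMem_apply_eq {ι : Type*} [Fintype ι] {σ : ι → Perm α}
    (hσ : Function.Injective σ) {K : Finset α} (hcard : Fintype.card ι = (#K)!) {τ : Perm α}
    (hagree : ∀ i, ∀ z ∉ K, σ i z = τ z) :
    univ.image σ = ({g : Perm α | ∀ z ∉ K, g z = τ z} : Finset (Perm α)) := by
  refine eq_of_subset_of_card_le (fun g hg => ?_) ?_
  · obtain ⟨i, -, rfl⟩ := mem_image.mp hg
    simpa using hagree i
  · rw [card_filter_forall_notMem_apply_eq, card_image_of_injective _ hσ, card_univ, hcard]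

theorem mul_swap_mem_image {ι : Type*} [Fintype ι] {σ : ι → Perm α}
    (hσ : Function.Injective σ) {K : Finset α} (hcard : Fintype.card ι = (#K)!) {τ : Perm α}
    (hagree : ∀ i, ∀ z ∉ K, σ i z = τ z) {a b : α} (ha : a ∈ K) (hb : b ∈ K) {g : Perm α}
    (hg : g ∈ univ.image σ) : g * swap a b ∈ univ.image σ := by
  rw [image_eq_filter_forall_notMem_apply_eq hσ hcard hagree] at hg ⊢
  simp only [mem_filter, mem_univ, true_and] at hg ⊢
  intro z hz
  rw [coe_mul, Function.comp_apply, swap_apply_of_ne_of_ne (ne_of_mem_of_not_mem ha hz).symm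
    (ne_of_mem_of_not_mem hb hz).symm, hg z hz]

section SwapClosedFamily

variable {ι : Type*} [Fintype ι] {σ : ι → Perm α} {K : Finset α} {τ : Perm α} {x y : α}

theorem sum_add_sum_mul_swap_eq_sum_union {M : Type*} [AddCommMonoid M]
    (hσ : Function.Injective σ) (hx : ∀ i j, σ i x = σ j x) (hxy : x ≠ y) (F : Perm α → M) :
    ∑ i, F (σ i) + ∑ i, F (σ i * swap x y) =
      ∑ g ∈ univ.image σ ∪ univ.image (σ · * swap x y), F g := by
  have hσ' : Function.Injective (σ · * swap x y) := fun i j h => hσ (mul_right_cancel h)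
  have hdisj : _root_.Disjoint (univ.image σ) (univ.image (σ · * swap x y)) := by
    simp only [disjoint_left, mem_image, mem_univ, true_and, not_exists, forall_exists_index,
      forall_apply_eq_imp_iff]
    exact fun i j => (ne_mul_swap_of_apply_eq hxy (hx i j)).symm
  rw [sum_union hdisj, sum_image hσ.injOn, sum_image hσ'.injOn]

theorem mul_swap_mem_image_union (hσ : Function.Injective σ) (hcard : Fintype.card ι = (#K)!)
    (hagree : ∀ i, ∀ z ∉ K, σ i z = τ z) (hx : x ∉ K) (hy : y ∉ K) {a b : α}
    (hab : (a = x ∧ b = y) ∨ (a ∈ K ∧ b ∈ K)) {g : Perm α}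
    (hg : g ∈ univ.image σ ∪ univ.image (σ · * swap x y)) :
    g * swap a b ∈ univ.image σ ∪ univ.image (σ · * swap x y) := by
  rcases hab with ⟨rfl, rfl⟩ | ⟨ha, hb⟩
  · simp only [mem_union, mem_image, mem_univ, true_and] at hg ⊢
    rcases hg with ⟨i, rfl⟩ | ⟨i, rfl⟩
    · exact Or.inr ⟨i, rfl⟩
    · exact Or.inl ⟨i, (mul_swap_mul_self _ _ _).symm⟩
  have hσ' : Function.Injective (σ · * swap x y) := fun i j h => hσ (mul_right_cancel h)
  have hagree' : ∀ i, ∀ z ∉ K, (σ i * swap x y) z = (τ * swap x y) z :=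
    fun i z hz => hagree i _ (swap_apply_notMem hx hy hz)
  rcases mem_union.mp hg with hg | hg
  · exact mem_union_left _ (mul_swap_mem_image hσ hcard hagree ha hb hg)
  · exact mem_union_right _ (mul_swap_mem_image hσ' hcard hagree' ha hb hg)

theorem sum_sign_mul_add_sum_sign_mul_mul_swap_eq_zero {R : Type*} [CommRing R]
    (hσ : Function.Injective σ) (hcard : Fintype.card ι = (#K)!)
    (hagree : ∀ i, ∀ z ∉ K, σ i z = τ z) (hx : x ∉ K) (hy : y ∉ K) (hxy : x ≠ y) {a b : α}
    (hab : a ≠ b) (hswap : (a = x ∧ b = y) ∨ (a ∈ K ∧ b ∈ K)) (f : Perm α → R)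
    (hf : ∀ g, f (g * swap a b) = f g) :
    ∑ i, ((sign (σ i) : ℤ) : R) * f (σ i) +
      ∑ i, ((sign (σ i * swap x y) : ℤ) : R) * f (σ i * swap x y) = 0 := by
  rw [sum_add_sum_mul_swap_eq_sum_union hσ (fun i j => (hagree i x hx).trans (hagree j x hx).symm)
    hxy fun g => ((sign g : ℤ) : R) * f g]
  exact sum_sign_mul_eq_zero_of_mul_swap_mem hab
    (fun g => mul_swap_mem_image_union hσ hcard hagree hx hy hswap) hf

end SwapClosedFamily

end Equiv.Perm

theorem Finset.one_lt_card_sdiff_pair {α : Type*} [DecidableEq α] {K : Finset α} {i k : α}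
    (hK : 2 < #K) (h : i ∉ K ∨ k ∉ K) : 1 < #(K \ {i, k}) := by
  have : #K - 1 ≤ #(K \ {i, k}) := by
    rcases h with h | h
    · calc #K - 1 ≤ #(K.erase k) := pred_card_le_card_erase
        _ ≤ _ := card_le_card fun z => by simp only [mem_erase, mem_sdiff]; grind
    · calc #K - 1 ≤ #(K.erase i) := pred_card_le_card_erase
        _ ≤ _ := card_le_card fun z => by simp only [mem_erase, mem_sdiff]; grind
  omega

theorem permMat2_mul_swap {n : ℕ} (g : Perm (Fin n)) {a b : Fin n} {p q : Fin n × Fin n}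
    (hpa : p.1 ≠ a) (hpb : p.1 ≠ b) (hqa : q.1 ≠ a) (hqb : q.1 ≠ b) :
    permMat2 (g * swap a b) p q = permMat2 g p q := by
  simp only [permMat2, coe_mul, Function.comp_apply, swap_apply_of_ne_of_ne hpa hpb,
    swap_apply_of_ne_of_ne hqa hqb]

theorem stmt2 {n : ℕ} (k₁ k₂ k₃ x y : Fin n)
    (hdist : List.Pairwise (· ≠ ·) [k₁, k₂, k₃, x, y])
    (σ : Fin 6 → Equiv.Perm (Fin n)) (hσinj : Function.Injective σ)
    (hagree : ∀ a b : Fin 6, ∀ z : Fin n, z ≠ k₁ → z ≠ k₂ → z ≠ k₃ → σ a z = σ b z)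
    (σ' : Fin 6 → Equiv.Perm (Fin n))
    (hσ' : ∀ a : Fin 6, σ' a = σ a * Equiv.swap x y) :
    ∀ p q : Fin n × Fin n,
      (∑ a : Fin 6, ((Equiv.Perm.sign (σ a) : ℤ) : ℝ) * permMat2 (σ a) p q)
        + (∑ a : Fin 6, ((Equiv.Perm.sign (σ' a) : ℤ) : ℝ) * permMat2 (σ' a) p q) = 0 := by
  simp only [ne_eq, List.pairwise_cons, List.mem_cons, List.not_mem_nil, or_false,
    forall_eq_or_imp, forall_eq, IsEmpty.forall_iff, implies_true, List.Pairwise.nil, and_self,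
    and_true] at hdist
  set K : Finset (Fin n) := {k₁, k₂, k₃}
  have hK : #K = 3 := card_eq_three.mpr ⟨k₁, k₂, k₃, by grind, by grind, by grind, rfl⟩
  have hcard : Fintype.card (Fin 6) = (#K)! := by rw [hK]; rfl
  have hxK : x ∉ K := by simp only [K, mem_insert, mem_singleton]; grind
  have hyK : y ∉ K := by simp only [K, mem_insert, mem_singleton]; grind
  have hσK : ∀ a, ∀ z ∉ K, σ a z = σ 0 z := fun a z hz => by
    simp only [K, mem_insert, mem_singleton, not_or] at hz
    exact hagree a 0 z hz.1 hz.2.1 hz.2.2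
  have hxy : x ≠ y := by grind
  intro p q
  simp only [hσ']
  by_cases hpq : (p.1 ≠ x ∧ p.1 ≠ y) ∧ (q.1 ≠ x ∧ q.1 ≠ y)
  · exact sum_sign_mul_add_sum_sign_mul_mul_swap_eq_zero hσinj hcard hσK hxK hyK hxy hxy
      (Or.inl ⟨rfl, rfl⟩) (permMat2 · p q)
      fun g => permMat2_mul_swap g hpq.1.1 hpq.1.2 hpq.2.1 hpq.2.2
  · have hout : p.1 ∉ K ∨ q.1 ∉ K := by grind
    obtain ⟨a, ha, b, hb, hab⟩ := one_lt_card.mp (one_lt_card_sdiff_pair (by omega) hout)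
    simp only [mem_sdiff, mem_insert, mem_singleton, not_or] at ha hb
    exact sum_sign_mul_add_sum_sign_mul_mul_swap_eq_zero hσinj hcard hσK hxK hyK hxy hab
      (Or.inr ⟨ha.1, hb.1⟩) (permMat2 · p q)
      fun g => permMat2_mul_swap g (Ne.symm ha.2.1) (Ne.symm hb.2.1) (Ne.symm ha.2.2)
        (Ne.symm hb.2.2)
end

section
/- Assume m, n ≥ 7 and let 4 ≤ k ≤ m. Then for every σ ∈ S_k, the matrix P^[2]_σ lies in the ℝ-linear span of the set {P^[2]_τ : τ ∈ S_{k−1} ∪ S_{k−2} ∪ S_{k−3} ∪ S_{k−4}}. -/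
open Finset

/-!
Pick four positions `r` with `σ (i r) = j r` and let `π` range over the permutations of these
positions, acting on `σ` by precomposition. Each entry of `P^[2]_{σπ}` depends on `π` through at
most two of its values, so it is unchanged by `π ↦ π * swap x y` for two other positions `x, y`;
hence `∑ sign π • P^[2]_{σπ} = 0`. Solving for the term `π = 1` writes `P^[2]_σ` as a combination
of the `P^[2]_{σπ}` with `π ≠ 1`, and such `π` fixes at most two of the four positions, so `σπ`
lies in `S_{k-4} ∪ S_{k-3} ∪ S_{k-2}`.
-/

open Equiv Function

namespace Equiv.Perm

variable {α : Type*} [DecidableEq α] [Fintype α]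

theorem sum_sign_smul_eq_zero_of_mul_swap_invariant {M : Type*} [AddCommGroup M]
    {f : Perm α → M} {x y : α} (hxy : x ≠ y) (hf : ∀ π, f (π * swap x y) = f π) :
    ∑ π, (sign π : ℤ) • f π = 0 := by
  refine sum_ninvolution (· * swap x y) (fun π => ?_) (fun π _ => ?_) (fun _ => mem_univ _)
    (mul_swap_involutive x y)
  · simp [hf, sign_swap hxy]
  · exact fun h => hxy (π.injective (by simpa using congrArg (· x) h)).symm

theorem mem_span_image_ne_one_of_sum_sign_smul_eq_zero {R M : Type*} [Ring R] [AddCommGroup M]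
    [Module R M] {f : Perm α → M} (hf : ∑ π, (sign π : ℤ) • f π = 0) :
    f 1 ∈ Submodule.span R (f '' {π | π ≠ 1}) := by
  rw [← sum_erase_add _ _ (mem_univ 1), sign_one, Units.val_one, one_smul] at hf
  rw [eq_neg_of_add_eq_zero_right hf, ← sum_neg_distrib]
  refine Submodule.sum_mem _ fun π hπ => ?_
  rw [← neg_smul, ← Int.cast_smul_eq_zsmul R]
  exact Submodule.smul_mem _ _ (Submodule.subset_span ⟨π, ne_of_mem_erase hπ, rfl⟩)

theorem card_filter_apply_eq_add_two_le_of_ne_one {π : Perm α} (hπ : π ≠ 1) :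
    #{t | π t = t} + 2 ≤ Fintype.card α := by
  have hsupp := two_le_card_support_of_ne_one hπ
  have hsplit := card_filter_add_card_filter_not (s := univ) (fun t => π t = t)
  rw [card_univ] at hsplit
  simp only [support, ne_eq] at hsupp
  omega

end Equiv.Perm

theorem Function.Embedding.exists_ne_apply_notMem {α β : Type*} [Fintype α] (a : α ↪ β)
    (s : Finset β) (hs : #s + 2 ≤ Fintype.card α) : ∃ x y, x ≠ y ∧ a x ∉ s ∧ a y ∉ s := by
  classical
  have hmem : #{t | a t ∈ s} ≤ #s :=
    card_le_card_of_injOn a (fun t ht => (mem_filter.1 ht).2) a.injective.injOn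
  have hsplit := card_filter_add_card_filter_not (s := univ) (fun t => a t ∈ s)
  obtain ⟨x, hx, y, hy, hxy⟩ := one_lt_card.1 (show 1 < #{t | a t ∉ s} by
    rw [card_univ] at hsplit; omega)
  exact ⟨x, y, hxy, (mem_filter.1 hx).2, (mem_filter.1 hy).2⟩

theorem Equiv.Perm.viaFintypeEmbedding_mul_swap_apply {α β : Type*} [Fintype α] [DecidableEq α]
    [DecidableEq β] (π : Perm α) (a : α ↪ β) {x y : α} {z : β} (hx : a x ≠ z) (hy : a y ≠ z) :
    (π * swap x y).viaFintypeEmbedding a z = π.viaFintypeEmbedding a z := by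
  by_cases hz : z ∈ Set.range a
  · obtain ⟨t, rfl⟩ := hz
    simp [swap_apply_of_ne_of_ne (a.injective.ne_iff.1 hx).symm (a.injective.ne_iff.1 hy).symm]
  · simp only [Perm.viaFintypeEmbedding_apply_notMem_range _ _ hz]

theorem permMat2_apply_eq_of_apply_eq {n : ℕ} {σ τ : Perm (Fin n)} {p q : Fin n × Fin n}
    (hp : σ p.1 = τ p.1) (hq : σ q.1 = τ q.1) : permMat2 σ p q = permMat2 τ p q := by
  simp only [permMat2, hp, hq]

theorem sum_sign_smul_permMat2_mul_viaFintypeEmbedding_eq_zero {α : Type*} [Fintype α]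
    [DecidableEq α] {n : ℕ} (hα : 4 ≤ Fintype.card α) (σ : Perm (Fin n)) (a : α ↪ Fin n) :
    ∑ π : Perm α, (Perm.sign π : ℤ) • permMat2 (σ * π.viaFintypeEmbedding a) = 0 := by
  ext p q
  obtain ⟨x, y, hxy, hx, hy⟩ := a.exists_ne_apply_notMem {p.1, q.1}
    (by have := card_le_two (a := p.1) (b := q.1); omega)
  simp only [mem_insert, mem_singleton, not_or] at hx hy
  simp only [Finset.sum_apply, Pi.smul_apply, Pi.zero_apply]
  refine Perm.sum_sign_smul_eq_zero_of_mul_swap_invariant hxy fun π => ?_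
  exact permMat2_apply_eq_of_apply_eq
    (by rw [Perm.mul_apply, Perm.mul_apply, π.viaFintypeEmbedding_mul_swap_apply a hx.1 hy.1])
    (by rw [Perm.mul_apply, Perm.mul_apply, π.viaFintypeEmbedding_mul_swap_apply a hx.2 hy.2])

section Agreement

variable {ι β : Type*} [Fintype ι] [DecidableEq β] {i j : ι → β}

def agreementSet (i j : ι → β) (σ : Perm β) : Finset ι := {r | σ (i r) = j r}

@[simp]
theorem mem_agreementSet {σ : Perm β} {r : ι} : r ∈ agreementSet i j σ ↔ σ (i r) = j r := by
  simp [agreementSet]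

theorem agreementSet_mul_viaFintypeEmbedding [DecidableEq ι] (hi : Injective i)
    (hj : Injective j) {σ : Perm β} {s : Finset ι} (hs : s ⊆ agreementSet i j σ) (π : Perm s) :
    agreementSet i j (σ * π.viaFintypeEmbedding ((Embedding.subtype (· ∈ s)).trans ⟨i, hi⟩)) =
      agreementSet i j σ \ s ∪ ({t | π t = t} : Finset s).map (Embedding.subtype _) := by
  set a : s ↪ β := (Embedding.subtype (· ∈ s)).trans ⟨i, hi⟩
  ext r
  simp only [mem_agreementSet, mem_union, mem_sdiff, mem_map, mem_filter, mem_univ, true_and,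
    Embedding.subtype_apply, Perm.mul_apply]
  by_cases hr : r ∈ s
  · have hπ : σ (i (π ⟨r, hr⟩)) = j (π ⟨r, hr⟩) := mem_agreementSet.1 (hs (π ⟨r, hr⟩).2)
    have hvia : π.viaFintypeEmbedding a (i r) = i (π ⟨r, hr⟩) :=
      Perm.viaFintypeEmbedding_apply_image π a ⟨r, hr⟩
    rw [hvia, hπ, hj.eq_iff]
    constructor
    · intro h
      exact Or.inr ⟨⟨r, hr⟩, Subtype.ext h, rfl⟩
    · rintro (⟨-, hns⟩ | ⟨t, ht, rfl⟩)
      · exact absurd hr hns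
      · rw [ht]
  · have hnr : i r ∉ Set.range a := by
      rintro ⟨t, ht⟩
      exact hr (hi ht ▸ t.2)
    rw [Perm.viaFintypeEmbedding_apply_notMem_range _ _ hnr]
    constructor
    · exact fun h => Or.inl ⟨h, hr⟩
    · rintro (⟨h, -⟩ | ⟨t, -, rfl⟩)
      · exact h
      · exact absurd t.2 hr

theorem card_agreementSet_mul_viaFintypeEmbedding [DecidableEq ι] (hi : Injective i)
    (hj : Injective j) {σ : Perm β} {s : Finset ι} (hs : s ⊆ agreementSet i j σ) (π : Perm s) :
    #(agreementSet i j (σ * π.viaFintypeEmbedding ((Embedding.subtype (· ∈ s)).trans ⟨i, hi⟩)))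
      + #s = #(agreementSet i j σ) + #{t | π t = t} := by
  have hdisj : Disjoint (agreementSet i j σ \ s)
      (({t | π t = t} : Finset s).map (Embedding.subtype _)) :=
    disjoint_left.2 fun r hr hr' => by
      obtain ⟨t, -, rfl⟩ := mem_map.1 hr'
      exact (mem_sdiff.1 hr).2 t.2
  rw [agreementSet_mul_viaFintypeEmbedding hi hj hs, card_union_of_disjoint hdisj, card_map,
    card_sdiff_of_subset hs]
  have := card_le_card hs
  omega

end Agreement

theorem mem_Sk_iff {n m : ℕ} {i j : Fin m → Fin n} {k : ℕ} {σ : Perm (Fin n)} :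
    σ ∈ Sk i j k ↔ #(agreementSet i j σ) = k := Iff.rfl

theorem stmt3_general {n m : ℕ}
    (i j : Fin m → Fin n) (hi : Function.Injective i) (hj : Function.Injective j)
    (k : ℕ) (hk4 : 4 ≤ k)
    (σ : Equiv.Perm (Fin n)) (hσ : σ ∈ Sk i j k) :
    permMat2 σ ∈ Submodule.span ℝ
      (permMat2 '' (Sk i j (k - 1) ∪ Sk i j (k - 2) ∪ Sk i j (k - 3) ∪ Sk i j (k - 4))) := by
  rw [mem_Sk_iff] at hσ
  obtain ⟨s, hs, hs4⟩ := exists_subset_card_eq (show 4 ≤ #(agreementSet i j σ) by omega)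
  have hspan := Perm.mem_span_image_ne_one_of_sum_sign_smul_eq_zero (R := ℝ)
    (sum_sign_smul_permMat2_mul_viaFintypeEmbedding_eq_zero (by simp [hs4]) σ
      ((Embedding.subtype (· ∈ s)).trans ⟨i, hi⟩))
  rw [Perm.viaFintypeEmbedding, Perm.extendDomain_one, mul_one] at hspan
  refine Submodule.span_mono ?_ hspan
  rintro _ ⟨π, hπ, rfl⟩
  refine ⟨_, ?_, rfl⟩
  have hcard := card_agreementSet_mul_viaFintypeEmbedding hi hj hs π
  have hfix := Perm.card_filter_apply_eq_add_two_le_of_ne_one hπ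
  rw [Fintype.card_coe, hs4] at hfix
  simp only [Set.mem_union, mem_Sk_iff]
  omega

theorem stmt3 {n m : ℕ} (hmn : m ≤ n) (hm : 7 ≤ m) (hn : 7 ≤ n)
    (i j : Fin m → Fin n) (hi : Function.Injective i) (hj : Function.Injective j)
    (k : ℕ) (hk4 : 4 ≤ k) (hkm : k ≤ m)
    (σ : Equiv.Perm (Fin n)) (hσ : σ ∈ Sk i j k) :
    permMat2 σ ∈ Submodule.span ℝ
      (permMat2 '' (Sk i j (k - 1) ∪ Sk i j (k - 2) ∪ Sk i j (k - 3) ∪ Sk i j (k - 4))) :=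
  stmt3_general i j hi hj k hk4 σ hσ
end

section
/- Assume m, n ≥ 7. Consider the graph G whose vertex set is S_0 and in which two permutations σ, σ' ∈ S_0 are adjacent if and only if σ' = σ ∘ τ for some transposition τ of [n]. Then G is connected: for any σ, σ' ∈ S_0 there is a finite sequence σ = τ_0, τ_1, …, τ_p = σ' of permutations, all lying in S_0, such that each τ_{q+1} is obtained from τ_q by composing with a transposition. -/
/-!
Induct on the Hamming distance between `σ` and `σ'`. For `a` with `σ a ≠ σ' a` let
`b = σ⁻¹ (σ' a)`: swapping `a` and `b` makes `σ` agree with `σ'` at `a` and is harmless unless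
it moves `σ a` onto the forbidden position at `b`. If this happens for every such `a`, and moving
`σ a` on through a third disagreement point `c` is blocked too, then injectivity of `i` and `j`
forces `σ` and `σ'` to differ by a single 3-cycle `a ↦ b ↦ x ↦ a` all of whose swaps are
forbidden. A fourth point, where `σ` and `σ'` agree, is then used as a buffer to reach `σ'` in
four swaps; this is where at least four points are needed.
-/

open Equiv Relation
open Function (Injective)

theorem Relation.ReflTransGen.exists_seq {β : Type*} {r : β → β → Prop} {a b : β}
    (h : ReflTransGen r a b) :
    ∃ (p : ℕ) (c : ℕ → β), c 0 = a ∧ c p = b ∧ ∀ q < p, r (c q) (c (q + 1)) := by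
  induction h using ReflTransGen.head_induction_on with
  | refl => exact ⟨0, fun _ => b, rfl, rfl, by simp⟩
  | @head a a' hab _ ih =>
    obtain ⟨p, c, h0, hp, hc⟩ := ih
    refine ⟨p + 1, fun | 0 => a | q + 1 => c q, rfl, hp, ?_⟩
    rintro (_ | q) hq
    · simpa [h0] using hab
    · exact hc q (by omega)

theorem hammingDist_lt_of_agree {ι : Type*} {β : ι → Type*} [Fintype ι] [∀ i, DecidableEq (β i)]
    {f g h : ∀ i, β i} (hfg : ∀ z, f z = h z → g z = h z) {a : ι} (hfa : f a ≠ h a)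
    (hga : g a = h a) : hammingDist g h < hammingDist f h := by
  refine Finset.card_lt_card ((Finset.ssubset_iff_of_subset ?_).2 ⟨a, ?_⟩)
  · intro z
    simpa using mt (hfg z)
  · simpa using ⟨hfa, hga⟩

section

variable {α ι : Type*} (i j : ι → α)

def Forbidden (a y : α) : Prop := ∃ r, i r = a ∧ j r = y

def Avoids (σ : Perm α) : Prop := ∀ a, ¬Forbidden i j a (σ a)

def SwapAdj [DecidableEq α] (σ τ : Perm α) : Prop :=
  Avoids i j σ ∧ Avoids i j τ ∧ ∃ a b, a ≠ b ∧ τ = σ * swap a b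

variable {i j}

theorem Forbidden.right_unique (hi : Injective i) {a y y' : α} (h : Forbidden i j a y)
    (h' : Forbidden i j a y') : y = y' := by
  obtain ⟨r, rfl, rfl⟩ := h
  obtain ⟨r', hr', rfl⟩ := h'
  rw [hi hr']

theorem Forbidden.left_unique (hj : Injective j) {a a' y : α} (h : Forbidden i j a y)
    (h' : Forbidden i j a' y) : a = a' := by
  obtain ⟨r, rfl, rfl⟩ := h
  obtain ⟨r', rfl, hr'⟩ := h'
  rw [hj hr']

theorem avoids_iff {σ : Perm α} : Avoids i j σ ↔ ∀ r, σ (i r) ≠ j r := by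
  simp only [Avoids, Forbidden, not_exists, not_and]
  exact ⟨fun h r => Ne.symm (h _ r rfl), fun h _ r hr => hr ▸ (h r).symm⟩

variable [DecidableEq α] {σ σ' : Perm α}

theorem Avoids.mul_swap (hσ : Avoids i j σ) {a b : α} (ha : ¬Forbidden i j a (σ b))
    (hb : ¬Forbidden i j b (σ a)) : Avoids i j (σ * swap a b) := by
  intro z
  rcases eq_or_ne z a with rfl | hza
  · simpa using ha
  rcases eq_or_ne z b with rfl | hzb
  · simpa using hb
  simpa [swap_apply_of_ne_of_ne hza hzb] using hσ z

theorem reach_of_blocked_threeCycle (hi : Injective i) (hj : Injective j)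
    (hσ : Avoids i j σ) (hσ' : Avoids i j σ') {a b x c : α} (hab : a ≠ b) (hax : a ≠ x)
    (hbx : b ≠ x) (hca : c ≠ a) (hcb : c ≠ b) (hcx : c ≠ x)
    (hFa : Forbidden i j b (σ a)) (hFx : Forbidden i j a (σ x))
    (h'a : σ' a = σ b) (h'b : σ' b = σ x) (h'x : σ' x = σ a)
    (h' : ∀ z, z ≠ a → z ≠ b → z ≠ x → σ' z = σ z) :
    ReflTransGen (SwapAdj i j) σ σ' := by
  have h₁ : Avoids i j (σ * swap a c) :=
    hσ.mul_swap (fun h => hcx (σ.injective (h.right_unique hi hFx)))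
      fun h => hcb (h.left_unique hj hFa)
  have h₂ : Avoids i j (σ * swap a c * swap a b) := by
    refine h₁.mul_swap ?_ ?_
    · simpa [swap_apply_of_ne_of_ne hab.symm hcb.symm, h'a] using hσ' a
    · simpa using fun h => hca (σ.injective (h.right_unique hi hFa))
  have h₃ : Avoids i j (σ * swap a c * swap a b * swap x c) := by
    refine h₂.mul_swap ?_ ?_
    · simpa [swap_apply_of_ne_of_ne hca hcb, h'x] using hσ' x
    · simpa [swap_apply_of_ne_of_ne hax.symm hbx.symm, swap_apply_of_ne_of_ne hax.symm hcx.symm]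
        using fun h => hca (h.left_unique hj hFx)
  have heq : σ * swap a c * swap a b * swap x c * swap b c = σ' := by
    ext z
    simp only [Perm.mul_apply, swap_apply_def]
    split_ifs <;> grind
  exact .tail (.tail (.tail (.single ⟨hσ, h₁, a, c, hca.symm, rfl⟩) ⟨h₁, h₂, a, b, hab, rfl⟩)
    ⟨h₂, h₃, x, c, hcx.symm, rfl⟩) ⟨h₃, hσ', b, c, hcb.symm, heq.symm⟩

variable [Fintype α]

theorem exists_reach_hammingDist_lt_of_swap (hσ : Avoids i j σ) (hσ' : Avoids i j σ')
    {a b : α} (ha : σ a ≠ σ' a) (hb : σ b = σ' a) (hF : ¬Forbidden i j b (σ a)) :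
    ∃ τ, ReflTransGen (SwapAdj i j) σ τ ∧ Avoids i j τ ∧
      hammingDist ⇑τ ⇑σ' < hammingDist ⇑σ ⇑σ' := by
  have hab : a ≠ b := by rintro rfl; exact ha hb
  have hτ : Avoids i j (σ * swap a b) := hσ.mul_swap (hb ▸ hσ' a) hF
  refine ⟨_, .single ⟨hσ, hτ, a, b, hab, rfl⟩, hτ,
    hammingDist_lt_of_agree (fun z hz => ?_) ha (by simp [hb])⟩
  have hza : z ≠ a := by rintro rfl; exact ha hz
  have hzb : z ≠ b := by rintro rfl; exact hab (σ'.injective (hb.symm.trans hz))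
  simp [swap_apply_of_ne_of_ne hza hzb, hz]

theorem exists_reach_hammingDist_lt_of_threeCycle (hi : Injective i) (hj : Injective j)
    (hσ : Avoids i j σ) (hσ' : Avoids i j σ') {a b c : α} (ha : σ a ≠ σ' a) (hb : σ b = σ' a)
    (hFb : Forbidden i j b (σ a)) (hc : σ c ≠ σ' c) (hca : c ≠ a) (hcb : c ≠ b)
    (hFc : ¬Forbidden i j a (σ c)) :
    ∃ τ, ReflTransGen (SwapAdj i j) σ τ ∧ Avoids i j τ ∧
      hammingDist ⇑τ ⇑σ' < hammingDist ⇑σ ⇑σ' := by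
  have hab : a ≠ b := by rintro rfl; exact ha hb
  have h₁ : Avoids i j (σ * swap a c) :=
    hσ.mul_swap hFc fun h => hcb (h.left_unique hj hFb)
  have h₂ : Avoids i j (σ * swap a c * swap a b) := by
    refine h₁.mul_swap ?_ ?_
    · simpa [swap_apply_of_ne_of_ne hab.symm hcb.symm, hb] using hσ' a
    · simpa using fun h => hca (σ.injective (h.right_unique hi hFb))
  refine ⟨_, .tail (.single ⟨hσ, h₁, a, c, hca.symm, rfl⟩) ⟨h₁, h₂, a, b, hab, rfl⟩, h₂,
    hammingDist_lt_of_agree (fun z hz => ?_) ha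
      (by simp [swap_apply_of_ne_of_ne hab.symm hcb.symm, hb])⟩
  have hza : z ≠ a := by rintro rfl; exact ha hz
  have hzb : z ≠ b := by rintro rfl; exact hab (σ'.injective (hb.symm.trans hz))
  have hzc : z ≠ c := by rintro rfl; exact hc hz
  simp [swap_apply_of_ne_of_ne hza hzb, swap_apply_of_ne_of_ne hza hzc, hz]

theorem reach_of_forall_forbidden (hi : Injective i) (hj : Injective j)
    (hα : 4 ≤ Fintype.card α) (hσ : Avoids i j σ) (hσ' : Avoids i j σ')
    (hA : ∀ a b, σ a ≠ σ' a → σ b = σ' a → Forbidden i j b (σ a)) {a b : α}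
    (ha : σ a ≠ σ' a) (hb : σ b = σ' a)
    (hB : ∀ c, σ c ≠ σ' c → c ≠ a → c ≠ b → Forbidden i j a (σ c)) :
    ReflTransGen (SwapAdj i j) σ σ' := by
  have hab : a ≠ b := by rintro rfl; exact ha hb
  set x := σ.symm (σ' b)
  have hx : σ x = σ' b := σ.apply_symm_apply _
  have hbD : σ b ≠ σ' b := hb ▸ σ'.injective.ne hab
  have hFa : Forbidden i j b (σ a) := hA a b ha hb
  have hxb : x ≠ b := by rintro h; exact hbD (h ▸ hx)
  have hxa : x ≠ a := by rintro rfl; exact hσ' b (hx ▸ hFa)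
  have hxD : σ x ≠ σ' x := hx ▸ σ'.injective.ne hxb.symm
  have hFx : Forbidden i j a (σ x) := hB x hxD hxa hxb
  have hD : ∀ z, z ≠ a → z ≠ b → z ≠ x → σ' z = σ z := by
    intro z hza hzb hzx
    by_contra hz
    exact hzx (σ.injective ((hB z (Ne.symm hz) hza hzb).right_unique hi hFx))
  have h'x : σ' x = σ a := by
    set y := σ.symm (σ' x)
    have hy : σ y = σ' x := σ.apply_symm_apply _
    rw [← hy, (hA x y hxD hy).left_unique hj hFx]
  obtain ⟨c, -, hc⟩ := Finset.exists_mem_notMem_of_card_lt_card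
    (s := {a, b, x}) (t := Finset.univ) (by grind [Finset.card_le_three, Finset.card_univ])
  simp only [Finset.mem_insert, Finset.mem_singleton, not_or] at hc
  exact reach_of_blocked_threeCycle hi hj hσ hσ' hab hxa.symm hxb.symm hc.1 hc.2.1 hc.2.2
    hFa hFx hb.symm hx.symm h'x hD

theorem exists_reach_hammingDist_lt (hi : Injective i) (hj : Injective j)
    (hα : 4 ≤ Fintype.card α) (hσ : Avoids i j σ) (hσ' : Avoids i j σ') (hne : σ ≠ σ') :
    ∃ τ, ReflTransGen (SwapAdj i j) σ τ ∧ Avoids i j τ ∧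
      hammingDist ⇑τ ⇑σ' < hammingDist ⇑σ ⇑σ' := by
  by_cases hA : ∃ a b, σ a ≠ σ' a ∧ σ b = σ' a ∧ ¬Forbidden i j b (σ a)
  · obtain ⟨a, b, ha, hb, hF⟩ := hA
    exact exists_reach_hammingDist_lt_of_swap hσ hσ' ha hb hF
  push Not at hA
  obtain ⟨a, ha⟩ : ∃ a, σ a ≠ σ' a := not_forall.1 fun h => hne (Equiv.ext h)
  set b := σ.symm (σ' a)
  have hb : σ b = σ' a := σ.apply_symm_apply _
  by_cases hB : ∃ c, σ c ≠ σ' c ∧ c ≠ a ∧ c ≠ b ∧ ¬Forbidden i j a (σ c)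
  · obtain ⟨c, hc, hca, hcb, hFc⟩ := hB
    exact exists_reach_hammingDist_lt_of_threeCycle hi hj hσ hσ' ha hb (hA a b ha hb) hc hca
      hcb hFc
  push Not at hB
  exact ⟨σ', reach_of_forall_forbidden hi hj hα hσ hσ' hA ha hb hB, hσ',
    by simpa [hammingDist_pos] using hne⟩

theorem reach_of_avoids (hi : Injective i) (hj : Injective j) (hα : 4 ≤ Fintype.card α)
    {σ σ' : Perm α} (hσ : Avoids i j σ) (hσ' : Avoids i j σ') :
    ReflTransGen (SwapAdj i j) σ σ' := by
  by_cases hne : σ = σ'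
  · exact hne ▸ .refl
  obtain ⟨τ, hστ, hτ, hlt⟩ := exists_reach_hammingDist_lt hi hj hα hσ hσ' hne
  exact hστ.trans (reach_of_avoids hi hj hα hτ hσ')
termination_by hammingDist ⇑σ ⇑σ'

end

theorem stmt5_general {n m : ℕ} (hn : 7 ≤ n)
    (i j : Fin m → Fin n) (hi : Function.Injective i) (hj : Function.Injective j)
    (σ σ' : Equiv.Perm (Fin n))
    (hσ : ∀ r : Fin m, σ (i r) ≠ j r) (hσ' : ∀ r : Fin m, σ' (i r) ≠ j r) :
    ∃ (p : ℕ) (c : ℕ → Equiv.Perm (Fin n)),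
      c 0 = σ ∧ c p = σ' ∧
      (∀ q ≤ p, ∀ r : Fin m, c q (i r) ≠ j r) ∧
      (∀ q < p, ∃ a b : Fin n, a ≠ b ∧ c (q + 1) = c q * Equiv.swap a b) := by
  have hreach := reach_of_avoids hi hj (by rw [Fintype.card_fin]; omega)
    (avoids_iff.2 hσ) (avoids_iff.2 hσ')
  obtain ⟨p, c, h0, hp, hc⟩ := hreach.exists_seq
  refine ⟨p, c, h0, hp, fun q hq => ?_, fun q hq => (hc q hq).2.2⟩
  rcases hq.lt_or_eq with hq | rfl
  · exact avoids_iff.1 (hc q hq).1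
  · exact hp ▸ hσ'

theorem stmt5 {n m : ℕ} (hmn : m ≤ n) (hm : 7 ≤ m) (hn : 7 ≤ n)
    (i j : Fin m → Fin n) (hi : Function.Injective i) (hj : Function.Injective j)
    (σ σ' : Equiv.Perm (Fin n))
    (hσ : ∀ r : Fin m, σ (i r) ≠ j r) (hσ' : ∀ r : Fin m, σ' (i r) ≠ j r) :
    ∃ (p : ℕ) (c : ℕ → Equiv.Perm (Fin n)),
      c 0 = σ ∧ c p = σ' ∧
      (∀ q ≤ p, ∀ r : Fin m, c q (i r) ≠ j r) ∧
      (∀ q < p, ∃ a b : Fin n, a ≠ b ∧ c (q + 1) = c q * Equiv.swap a b) :=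
  stmt5_general hn i j hi hj σ σ' hσ hσ'
end

section
/- Let i, j, i', j' ∈ [n] be four pairwise distinct indices. Let σ_1 be any permutation of [n], let σ_2 = σ_1 ∘ (i j) (swapping the values of σ_1 at positions i and j), let σ_3 = σ_2 ∘ (i' j'), and let σ_4 = σ_3 ∘ (i j). Then the n²×n² matrix (P^[2]_{σ_1} − P^[2]_{σ_2}) − (P^[2]_{σ_4} − P^[2]_{σ_3}) has at most 32 nonzero entries; in particular, its number of nonzero entries is bounded independently of n. -/
open Finset

/-!
Write `σ₂ = σ₁ τ`, `σ₃ = σ₁ τ ρ`, `σ₄ = σ₁ τ ρ τ = σ₁ ρ` with `τ = (i j)` and `ρ = (i' j')`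
disjoint. Right multiplication by `τ` only changes the rows `{i, j}` of `P_σ`, and `ρ` only the
rows `{i', j'}`. So at every position `p` the entries `x_k = P_{σ_k}(p)` satisfy
`x₁ = x₂ ∧ x₃ = x₄` (row outside `{i, j}`) or `x₁ = x₄ ∧ x₂ = x₃` (row outside `{i', j'}`).
For such quadruples `(x₁y₁ - x₂y₂) - (x₄y₄ - x₃y₃)` is `0` or a product `(x₁ - x₃)(y₁ - y₂)` or
`(x₁ - x₂)(y₁ - y₄)`, so a nonzero entry pairs a position of the `2 × 2` block changed by `τ`
with one of the block changed by `ρ`: at most `2 · 4 · 4 = 32` entries.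
-/

open Equiv

section SecondDifference

variable {R : Type*} [CommRing R]

def IsSwapQuadruple (x₁ x₂ x₃ x₄ : R) : Prop :=
  (x₁ = x₂ ∧ x₃ = x₄) ∨ (x₁ = x₄ ∧ x₂ = x₃)

theorem IsSwapQuadruple.ne_or_ne_of_sub_ne_zero {x₁ x₂ x₃ x₄ y₁ y₂ y₃ y₄ : R}
    (hx : IsSwapQuadruple x₁ x₂ x₃ x₄) (hy : IsSwapQuadruple y₁ y₂ y₃ y₄)
    (h : (x₁ * y₁ - x₂ * y₂) - (x₄ * y₄ - x₃ * y₃) ≠ 0) :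
    (x₁ ≠ x₂ ∧ y₁ ≠ y₄) ∨ (x₁ ≠ x₄ ∧ y₁ ≠ y₂) := by
  rcases hx with ⟨rfl, rfl⟩ | ⟨rfl, rfl⟩ <;> rcases hy with ⟨rfl, rfl⟩ | ⟨rfl, rfl⟩
  · exact absurd (by ring) h
  · have h' : (x₁ - x₃) * (y₁ - y₂) ≠ 0 := by convert h using 1; ring
    exact .inr ⟨sub_ne_zero.mp (left_ne_zero_of_mul h'), sub_ne_zero.mp (right_ne_zero_of_mul h')⟩
  · have h' : (x₁ - x₂) * (y₁ - y₃) ≠ 0 := by convert h using 1; ring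
    exact .inl ⟨sub_ne_zero.mp (left_ne_zero_of_mul h'), sub_ne_zero.mp (right_ne_zero_of_mul h')⟩
  · exact absurd (by ring) h

end SecondDifference

section PermEntry

variable {α : Type*} [DecidableEq α]

noncomputable def permEntry (σ : Perm α) (p : α × α) : ℝ :=
  if σ p.1 = p.2 then 1 else 0

def swapBlock (σ : Perm α) (a b : α) : Finset (α × α) :=
  {a, b} ×ˢ {σ a, σ b}

theorem card_swapBlock_le (σ : Perm α) (a b : α) : #(swapBlock σ a b) ≤ 4 := by
  rw [swapBlock, card_product]
  exact Nat.mul_le_mul card_le_two card_le_two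

theorem permEntry_mul_swap_of_ne (σ : Perm α) {a b : α} {p : α × α}
    (ha : p.1 ≠ a) (hb : p.1 ≠ b) : permEntry (σ * swap a b) p = permEntry σ p := by
  simp only [permEntry, Perm.mul_apply, swap_apply_of_ne_of_ne ha hb]

theorem mem_swapBlock_of_permEntry_ne (σ : Perm α) {a b : α} {p : α × α}
    (h : permEntry σ p ≠ permEntry (σ * swap a b) p) : p ∈ swapBlock σ a b := by
  obtain ⟨x, y⟩ := p
  by_cases hx : x = a ∨ x = b
  · simp only [swapBlock, mem_product, mem_insert, mem_singleton]
    refine ⟨hx, ?_⟩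
    rcases hx with rfl | rfl <;>
      simp only [permEntry, Perm.mul_apply, swap_apply_left, swap_apply_right] at h <;>
      split_ifs at h <;> simp_all
  · rw [not_or] at hx
    exact absurd (permEntry_mul_swap_of_ne σ hx.1 hx.2).symm h

theorem isSwapQuadruple_permEntry {σ₁ σ₂ σ₃ σ₄ : Perm α} {a b c d : α}
    (hab : Disjoint ({a, b} : Finset α) {c, d})
    (h₁₂ : σ₂ = σ₁ * swap a b) (h₃₄ : σ₄ = σ₃ * swap a b)
    (h₁₄ : σ₄ = σ₁ * swap c d) (h₂₃ : σ₃ = σ₂ * swap c d) (p : α × α) :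
    IsSwapQuadruple (permEntry σ₁ p) (permEntry σ₂ p) (permEntry σ₃ p) (permEntry σ₄ p) := by
  subst h₁₂ h₂₃
  by_cases hp : p.1 ∈ ({a, b} : Finset α)
  · have hcd : p.1 ≠ c ∧ p.1 ≠ d := by simpa [not_or] using disjoint_left.mp hab hp
    right
    rw [h₁₄, permEntry_mul_swap_of_ne _ hcd.1 hcd.2, permEntry_mul_swap_of_ne _ hcd.1 hcd.2]
    exact ⟨rfl, rfl⟩
  · have hab' : p.1 ≠ a ∧ p.1 ≠ b := by simpa [not_or] using hp
    left
    rw [h₃₄, permEntry_mul_swap_of_ne _ hab'.1 hab'.2, permEntry_mul_swap_of_ne _ hab'.1 hab'.2]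
    exact ⟨rfl, rfl⟩

theorem mem_swapBlock_of_secondDiff_ne_zero {σ₁ σ₂ σ₃ σ₄ : Perm α} {a b c d : α}
    (hab : Disjoint ({a, b} : Finset α) {c, d})
    (h₁₂ : σ₂ = σ₁ * swap a b) (h₃₄ : σ₄ = σ₃ * swap a b)
    (h₁₄ : σ₄ = σ₁ * swap c d) (h₂₃ : σ₃ = σ₂ * swap c d) {p q : α × α}
    (h : (permEntry σ₁ p * permEntry σ₁ q - permEntry σ₂ p * permEntry σ₂ q)
      - (permEntry σ₄ p * permEntry σ₄ q - permEntry σ₃ p * permEntry σ₃ q) ≠ 0) :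
    (p, q) ∈ swapBlock σ₁ a b ×ˢ swapBlock σ₁ c d ∪ swapBlock σ₁ c d ×ˢ swapBlock σ₁ a b := by
  have hquad := isSwapQuadruple_permEntry hab h₁₂ h₃₄ h₁₄ h₂₃
  rw [mem_union, mem_product, mem_product]
  subst h₁₂ h₁₄
  rcases (hquad p).ne_or_ne_of_sub_ne_zero (hquad q) h with ⟨hp, hq⟩ | ⟨hp, hq⟩
  · exact .inl ⟨mem_swapBlock_of_permEntry_ne σ₁ hp, mem_swapBlock_of_permEntry_ne σ₁ hq⟩
  · exact .inr ⟨mem_swapBlock_of_permEntry_ne σ₁ hp, mem_swapBlock_of_permEntry_ne σ₁ hq⟩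

theorem swap_mul_swap_mul_swap_of_ne {a b c d : α} (hac : c ≠ a) (hbc : c ≠ b) (had : d ≠ a)
    (hbd : d ≠ b) : swap a b * swap c d * swap a b = swap c d := by
  conv_rhs => rw [← swap_apply_of_ne_of_ne hac hbc, ← swap_apply_of_ne_of_ne had hbd]
  rw [swap_apply_apply, swap_inv]

end PermEntry

theorem stmt6 {n : ℕ} (i j i' j' : Fin n)
    (hdist : List.Pairwise (· ≠ ·) [i, j, i', j'])
    (σ₁ σ₂ σ₃ σ₄ : Equiv.Perm (Fin n))
    (h2 : σ₂ = σ₁ * Equiv.swap i j)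
    (h3 : σ₃ = σ₂ * Equiv.swap i' j')
    (h4 : σ₄ = σ₃ * Equiv.swap i j) :
    {pq : (Fin n × Fin n) × (Fin n × Fin n) |
        (permMat2 σ₁ pq.1 pq.2 - permMat2 σ₂ pq.1 pq.2)
          - (permMat2 σ₄ pq.1 pq.2 - permMat2 σ₃ pq.1 pq.2) ≠ 0}.ncard ≤ 32 := by
  simp only [List.pairwise_cons, List.mem_cons, List.not_mem_nil, forall_eq_or_imp] at hdist
  obtain ⟨⟨-, hii', hij', -⟩, ⟨hji', hjj', -⟩, -⟩ := hdist
  have hdisj : Disjoint ({i, j} : Finset (Fin n)) {i', j'} := by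
    simp [hii'.symm, hij'.symm, hji'.symm, hjj'.symm]
  have h14 : σ₄ = σ₁ * swap i' j' := by
    rw [h4, h3, h2, mul_assoc, mul_assoc, ← mul_assoc (swap i j),
      swap_mul_swap_mul_swap_of_ne hii'.symm hji'.symm hij'.symm hjj'.symm]
  set S := swapBlock σ₁ i j ×ˢ swapBlock σ₁ i' j' ∪ swapBlock σ₁ i' j' ×ˢ swapBlock σ₁ i j
  calc _ ≤ (S : Set _).ncard :=
        Set.ncard_le_ncard (fun _ h => mem_swapBlock_of_secondDiff_ne_zero hdisj h2 h4 h14 h3 h)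
          S.finite_toSet
    _ ≤ 4 * 4 + 4 * 4 := by
      rw [Set.ncard_coe_finset]
      refine (card_union_le _ _).trans ?_
      rw [card_product, card_product]
      gcongr <;> apply card_swapBlock_le
end

section
/- Assume m, n ≥ 7. Let σ ∈ S_0 and let σ' ∈ S_0 be such that σ' = σ ∘ τ for some transposition τ of [n]. Then the matrix P^[2]_σ − P^[2]_{σ'} lies in the ℝ-linear span of the set {P^[2]_ρ : ρ ∈ S_1 ∪ S_2}. -/
open Finset

/-!
Write `v_ρ` for the permutation matrix of `ρ` flattened to a vector, so that
`P^[2]_ρ = v_ρ ⊗ v_ρ`, and put `τ = (a b)` and `D ρ = P^[2]_ρ - P^[2]_{ρτ}`. If `γ₁, γ₂, τ` have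
pairwise disjoint supports, `v` is affine along them (`v_{σγ₁γ₂} = v_{σγ₁} + v_{σγ₂} - v_σ`, and
likewise with `τ`), and expanding the tensor squares gives `D σ = D (σγ₁) + D (σγ₂) - D (σγ₁γ₂)`.
Since neither `σ` nor `στ` satisfies a constraint, `σγ` and `σγτ` satisfy the same ones, so
`D (σγ)` lies in the span as soon as `σγ ∈ S_1 ∪ S_2`. It therefore suffices to find such
`γ₁, γ₂` avoiding `a, b` with `σγ₁, σγ₂ ∈ S_1` (then `σγ₁γ₂ ∈ S_2`), possibly after first passing
from `σ` to some `σδ ∈ S_0` by the same identity. At least `m - 4 ≥ 3` constraints have both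
positions `i_r` and `σ⁻¹ j_r` outside `{a, b}`; either two of them do not interact, and
transpositions or 3-cycles through a fresh point (this is where `n ≥ 7` enters) handle them, or
the three form a cycle under `i_r ↦ σ⁻¹ j_r`.
-/

open Equiv Equiv.Perm

namespace PermMat2

section Vec

variable {α : Type*} [DecidableEq α]

noncomputable def permVec (σ : Perm α) : α × α → ℝ := fun p => if σ p.1 = p.2 then 1 else 0

theorem permVec_congr {ρ ρ' : Perm α} {x : α} (h : ρ x = ρ' x) (y : α) :
    permVec ρ (x, y) = permVec ρ' (x, y) := by
  unfold permVec; rw [h]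

theorem permVec_mul_mul (σ : Perm α) {γ₁ γ₂ : Perm α} (h : γ₁.Disjoint γ₂) :
    permVec (σ * γ₁ * γ₂) = permVec (σ * γ₁) + permVec (σ * γ₂) - permVec σ := by
  funext ⟨x, y⟩
  simp only [Pi.add_apply, Pi.sub_apply]
  rcases h x with hx | hx
  · have e : (σ * γ₁ * γ₂) x = (σ * γ₂) x := by
      rw [mul_assoc, h.commute.eq, ← mul_assoc]; simp [hx]
    rw [permVec_congr e, permVec_congr (show (σ * γ₁) x = σ x by simp [hx])]
    ring
  · rw [permVec_congr (show (σ * γ₁ * γ₂) x = (σ * γ₁) x by simp [hx]),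
      permVec_congr (show (σ * γ₂) x = σ x by simp [hx])]
    ring

theorem support_swap_subset [Fintype α] (x y : α) : (swap x y).support ⊆ {x, y} := by
  rcases eq_or_ne x y with rfl | h
  · simp
  · rw [support_swap h]

theorem disjoint_swap_swap_of_ne {x y z t : α} (hxz : x ≠ z) (hxt : x ≠ t) (hyz : y ≠ z)
    (hyt : y ≠ t) : (swap x y).Disjoint (swap z t) := by
  intro v
  by_cases hv : v = x ∨ v = y
  · right; rcases hv with rfl | rfl <;> exact swap_apply_of_ne_of_ne ‹_› ‹_›
  · left; exact swap_apply_of_ne_of_ne (not_or.1 hv).1 (not_or.1 hv).2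

end Vec

theorem permMat2_eq_permVec {n : ℕ} (σ : Perm (Fin n)) :
    permMat2 σ = fun p q => permVec σ p * permVec σ q := rfl

theorem permMat2_sub_mul_eq {n : ℕ} (σ τ : Perm (Fin n)) {γ₁ γ₂ : Perm (Fin n)}
    (h₁₂ : γ₁.Disjoint γ₂) (h₁ : γ₁.Disjoint τ) (h₂ : γ₂.Disjoint τ) :
    permMat2 σ - permMat2 (σ * τ) =
      (permMat2 (σ * γ₁) - permMat2 (σ * γ₁ * τ)) + (permMat2 (σ * γ₂) - permMat2 (σ * γ₂ * τ))
        - (permMat2 (σ * γ₁ * γ₂) - permMat2 (σ * γ₁ * γ₂ * τ)) := by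
  have e₁₂τ := permVec_mul_mul σ (h₁.mul_left h₂)
  rw [← mul_assoc] at e₁₂τ
  funext p q
  simp only [permMat2_eq_permVec, Pi.sub_apply, Pi.add_apply, e₁₂τ, permVec_mul_mul σ h₁₂,
    permVec_mul_mul σ h₁, permVec_mul_mul σ h₂]
  ring

section Matching

variable {n m : ℕ} (i j : Fin m → Fin n)

/-- `σ * γ` satisfies the constraint at position `c` exactly when `Wants i j σ c (γ c)`. -/
def Wants (σ : Perm (Fin n)) (c d : Fin n) : Prop := ∃ r, i r = c ∧ σ d = j r

def matchSet (ρ : Perm (Fin n)) : Finset (Fin n) := (univ.filter fun r => ρ (i r) = j r).image i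

variable {i j} {σ ρ γ γ₁ γ₂ : Perm (Fin n)} {c d : Fin n}

theorem mem_matchSet : c ∈ matchSet i j ρ ↔ Wants i j ρ c c := by
  simp only [matchSet, Wants, mem_image, mem_filter, mem_univ, true_and]
  constructor
  · rintro ⟨r, hr, rfl⟩; exact ⟨r, rfl, hr⟩
  · rintro ⟨r, rfl, hr⟩; exact ⟨r, hr, rfl⟩

theorem wants_mul : Wants i j (σ * γ) c d ↔ Wants i j σ c (γ d) := Iff.rfl

theorem Wants.right_unique (hi : Function.Injective i) {d' : Fin n} (h : Wants i j σ c d)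
    (h' : Wants i j σ c d') : d = d' := by
  obtain ⟨r, rfl, hr⟩ := h
  obtain ⟨r', hr', hr''⟩ := h'
  obtain rfl := hi hr'
  exact σ.injective (hr.trans hr''.symm)

theorem Wants.left_unique (hj : Function.Injective j) {c' : Fin n} (h : Wants i j σ c d)
    (h' : Wants i j σ c' d) : c = c' := by
  obtain ⟨r, rfl, hr⟩ := h
  obtain ⟨r', rfl, hr'⟩ := h'
  rw [hj (hr.symm.trans hr')]

theorem mem_Sk_iff (hi : Function.Injective i) {k : ℕ} :
    ρ ∈ Sk i j k ↔ (matchSet i j ρ).card = k := by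
  rw [matchSet, card_image_of_injective _ hi]; rfl

theorem matchSet_eq_empty_iff : matchSet i j ρ = ∅ ↔ ∀ c, ¬ Wants i j ρ c c := by
  simp [eq_empty_iff_forall_notMem, mem_matchSet]

theorem matchSet_mul_subset_support (h0 : matchSet i j σ = ∅) :
    matchSet i j (σ * γ) ⊆ γ.support := by
  intro c hc
  rw [mem_support]
  intro hγ
  rw [mem_matchSet, wants_mul, hγ] at hc
  exact matchSet_eq_empty_iff.1 h0 c hc

theorem matchSet_mul_mul (h0 : matchSet i j σ = ∅) (h : γ₁.Disjoint γ₂) :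
    matchSet i j (σ * γ₁ * γ₂) = matchSet i j (σ * γ₁) ∪ matchSet i j (σ * γ₂) := by
  have hσ := matchSet_eq_empty_iff.1 h0
  ext c
  simp only [mem_union, mem_matchSet, wants_mul]
  rcases h c with hc | hc
  · have e : γ₁ (γ₂ c) = γ₂ c := by
      rw [← mul_apply, h.commute.eq, mul_apply, hc]
    simp [e, hc, hσ c]
  · simp [hc, hσ c]

theorem card_matchSet_mul_mul (h0 : matchSet i j σ = ∅) (h : γ₁.Disjoint γ₂) :
    (matchSet i j (σ * γ₁ * γ₂)).card =
      (matchSet i j (σ * γ₁)).card + (matchSet i j (σ * γ₂)).card := by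
  rw [matchSet_mul_mul h0 h, card_union_of_disjoint]
  exact h.disjoint_support.mono (matchSet_mul_subset_support h0) (matchSet_mul_subset_support h0)

theorem matchSet_mul_swap_eq_empty (h0 : matchSet i j σ = ∅) (hcd : ¬ Wants i j σ c d)
    (hdc : ¬ Wants i j σ d c) : matchSet i j (σ * swap c d) = ∅ := by
  have hσ := matchSet_eq_empty_iff.1 h0
  rw [matchSet_eq_empty_iff]
  intro x
  rw [wants_mul]
  rcases eq_or_ne x c with rfl | hxc
  · simpa using hcd
  rcases eq_or_ne x d with rfl | hxd
  · simpa using hdc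
  · rw [swap_apply_of_ne_of_ne hxc hxd]; exact hσ x

theorem matchSet_mul_swap_eq_singleton (h0 : matchSet i j σ = ∅) (hcd : Wants i j σ c d)
    (hdc : ¬ Wants i j σ d c) : matchSet i j (σ * swap c d) = {c} := by
  have hσ := matchSet_eq_empty_iff.1 h0
  ext x
  rw [mem_matchSet, wants_mul, mem_singleton]
  rcases eq_or_ne x c with rfl | hxc
  · simpa using hcd
  rcases eq_or_ne x d with rfl | hxd
  · simpa [hxc] using hdc
  · rw [swap_apply_of_ne_of_ne hxc hxd]; simpa [hxc] using hσ x

theorem card_matchSet_mul_swap_mem_Icc (h0 : matchSet i j σ = ∅) (hcd : Wants i j σ c d) :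
    (matchSet i j (σ * swap c d)).card ∈ Set.Icc 1 2 := by
  have hc : c ∈ matchSet i j (σ * swap c d) := by rw [mem_matchSet, wants_mul]; simpa using hcd
  refine ⟨card_pos.2 ⟨c, hc⟩, ?_⟩
  calc (matchSet i j (σ * swap c d)).card ≤ (swap c d).support.card :=
        card_le_card (matchSet_mul_subset_support h0)
    _ ≤ ({c, d} : Finset (Fin n)).card := card_le_card (support_swap_subset c d)
    _ ≤ 2 := card_le_two

/-- `swap c d * swap d z` is the cycle `c ↦ d ↦ z ↦ c`. -/
theorem matchSet_mul_cycle_eq_singleton (hi : Function.Injective i) (hj : Function.Injective j)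
    (h0 : matchSet i j σ = ∅) (hcd : Wants i j σ c d) (hdc : Wants i j σ d c) {z : Fin n}
    (hzc : z ≠ c) (hzd : z ≠ d) : matchSet i j (σ * (swap c d * swap d z)) = {c} := by
  have hσ := matchSet_eq_empty_iff.1 h0
  have hcd' : c ≠ d := by rintro rfl; exact hσ c hcd
  ext x
  rw [mem_matchSet, wants_mul, mem_singleton, mul_apply]
  rcases eq_or_ne x c with rfl | hxc
  · simpa [swap_apply_of_ne_of_ne hcd' hzc.symm] using hcd
  rcases eq_or_ne x d with rfl | hxd
  · simp only [swap_apply_left, swap_apply_of_ne_of_ne hzc hzd, hxc, iff_false]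
    exact fun h => hzc (hdc.right_unique hi h).symm
  rcases eq_or_ne x z with rfl | hxz
  · simp only [swap_apply_right, hxc, iff_false]
    exact fun h => hxd (h.left_unique hj hdc)
  · rw [swap_apply_of_ne_of_ne hxd hxz, swap_apply_of_ne_of_ne hxc hxd]
    simpa [hxc] using hσ x

theorem ne_of_not_adjacent (hj : Function.Injective j) (h0 : matchSet i j σ = ∅)
    {e f : Fin n} (hcd : Wants i j σ c d) (hef : Wants i j σ e f) (hce : c ≠ e)
    (hce' : ¬ Wants i j σ c e) (hec : ¬ Wants i j σ e c) :
    c ≠ d ∧ e ≠ f ∧ c ≠ f ∧ d ≠ e ∧ d ≠ f := by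
  have hσ := matchSet_eq_empty_iff.1 h0
  refine ⟨?_, ?_, ?_, ?_, ?_⟩ <;> rintro rfl
  exacts [hσ c hcd, hσ e hef, hec hef, hce' hcd, hce (hcd.left_unique hj hef)]

end Matching

section Span

variable {n m : ℕ} (i j : Fin m → Fin n)

noncomputable abbrev spanS₁₂ : Submodule ℝ ((Fin n × Fin n) → (Fin n × Fin n) → ℝ) :=
  Submodule.span ℝ (permMat2 '' (Sk i j 1 ∪ Sk i j 2))

variable {i j} (hi : Function.Injective i) {σ τ γ γ₁ γ₂ δ : Perm (Fin n)}
  (h0 : matchSet i j σ = ∅) (hτ : matchSet i j (σ * τ) = ∅)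
include hi h0 hτ

theorem sub_mem_spanS₁₂_of_card_mem_Icc (hγτ : γ.Disjoint τ)
    (hγ : (matchSet i j (σ * γ)).card ∈ Set.Icc 1 2) :
    permMat2 (σ * γ) - permMat2 (σ * γ * τ) ∈ spanS₁₂ i j := by
  have hγτ' : (matchSet i j (σ * γ * τ)).card = (matchSet i j (σ * γ)).card := by
    rw [card_matchSet_mul_mul h0 hγτ, hτ, card_empty, add_zero]
  have mem : ∀ ρ, (matchSet i j ρ).card ∈ Set.Icc 1 2 → permMat2 ρ ∈ spanS₁₂ i j := by
    rintro ρ ⟨h1, h2⟩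
    refine Submodule.subset_span ⟨ρ, ?_, rfl⟩
    rw [Set.mem_union, mem_Sk_iff hi, mem_Sk_iff hi]
    omega
  exact Submodule.sub_mem _ (mem _ hγ) (mem _ (hγτ' ▸ hγ))

theorem sub_mem_spanS₁₂_of_card_eq_one (h₁₂ : γ₁.Disjoint γ₂) (h₁ : γ₁.Disjoint τ)
    (h₂ : γ₂.Disjoint τ) (hc₁ : (matchSet i j (σ * γ₁)).card = 1)
    (hc₂ : (matchSet i j (σ * γ₂)).card = 1) :
    permMat2 σ - permMat2 (σ * τ) ∈ spanS₁₂ i j := by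
  have hc₁₂ : (matchSet i j (σ * γ₁ * γ₂)).card = 2 := by
    rw [card_matchSet_mul_mul h0 h₁₂, hc₁, hc₂]
  have m₁₂ := sub_mem_spanS₁₂_of_card_mem_Icc hi h0 hτ (h₁.mul_left h₂)
    (by rw [← mul_assoc, hc₁₂]; simp)
  rw [← mul_assoc] at m₁₂
  rw [permMat2_sub_mul_eq σ τ h₁₂ h₁ h₂]
  exact sub_mem (add_mem (sub_mem_spanS₁₂_of_card_mem_Icc hi h0 hτ h₁ (by simp [hc₁]))
    (sub_mem_spanS₁₂_of_card_mem_Icc hi h0 hτ h₂ (by simp [hc₂]))) m₁₂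

theorem sub_mem_spanS₁₂_of_sub_mem_mul (hδγ : δ.Disjoint γ) (hδτ : δ.Disjoint τ)
    (hγτ : γ.Disjoint τ) (hγ : (matchSet i j (σ * γ)).card ∈ Set.Icc 1 2)
    (hδ0 : matchSet i j (σ * δ) = ∅)
    (hδ : matchSet i j (σ * δ * τ) = ∅ →
      permMat2 (σ * δ) - permMat2 (σ * δ * τ) ∈ spanS₁₂ i j) :
    permMat2 σ - permMat2 (σ * τ) ∈ spanS₁₂ i j := by
  have hδτ0 : matchSet i j (σ * δ * τ) = ∅ := by
    rw [matchSet_mul_mul h0 hδτ, hδ0, hτ, union_empty]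
  have mδγ := sub_mem_spanS₁₂_of_card_mem_Icc hi h0 hτ (hδτ.mul_left hγτ)
    (by rwa [← mul_assoc, card_matchSet_mul_mul h0 hδγ, hδ0, card_empty, zero_add])
  rw [← mul_assoc] at mδγ
  rw [permMat2_sub_mul_eq σ τ hδγ hδτ hγτ]
  exact sub_mem (add_mem (hδ hδτ0) (sub_mem_spanS₁₂_of_card_mem_Icc hi h0 hτ hγτ hγ)) mδγ

end Span

theorem le_card_filter_disjoint_add {n m : ℕ} {f g : Fin m → Fin n} (hf : Function.Injective f)
    (hg : Function.Injective g) (A : Finset (Fin n)) :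
    m ≤ (univ.filter fun r => Disjoint ({f r, g r} : Finset (Fin n)) A).card + 2 * A.card := by
  have hfA : (univ.filter fun r => f r ∈ A).card ≤ A.card :=
    card_le_card_of_injOn f (fun r hr => by simpa using hr) hf.injOn
  have hgA : (univ.filter fun r => g r ∈ A).card ≤ A.card :=
    card_le_card_of_injOn g (fun r hr => by simpa using hr) hg.injOn
  have hbad : (univ.filter fun r => ¬ Disjoint ({f r, g r} : Finset (Fin n)) A) ⊆
      (univ.filter fun r => f r ∈ A) ∪ univ.filter fun r => g r ∈ A := by
    intro r
    simp only [mem_filter, mem_univ, true_and, mem_union, disjoint_insert_left,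
      disjoint_singleton_left]
    tauto
  have hsplit := card_filter_add_card_filter_not (s := univ)
    (fun r => Disjoint ({f r, g r} : Finset (Fin n)) A)
  rw [card_univ, Fintype.card_fin] at hsplit
  have := (card_le_card hbad).trans (card_union_le _ _)
  omega

section Cases

variable {n m : ℕ} {i j : Fin m → Fin n} (hi : Function.Injective i) (hj : Function.Injective j)
  {σ : Perm (Fin n)} {a b : Fin n}
  (h0 : matchSet i j σ = ∅) (hτ : matchSet i j (σ * swap a b) = ∅)
include hi hj h0 hτ

theorem sub_mem_spanS₁₂_of_triangle (hn : 6 ≤ n) {p q w : Fin n} (hpq : Wants i j σ p q)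
    (hqw : Wants i j σ q w) (hwp : Wants i j σ w p)
    (hab : Disjoint ({p, q, w} : Finset (Fin n)) {a, b}) :
    permMat2 σ - permMat2 (σ * swap a b) ∈ spanS₁₂ i j := by
  have hσ := matchSet_eq_empty_iff.1 h0
  obtain ⟨y, -, hy⟩ := exists_mem_notMem_of_card_lt_card (s := {a, b, p, q, w}) (t := univ)
    (by rw [card_univ, Fintype.card_fin]; exact card_le_five.trans_lt (by omega))
  simp only [mem_insert, mem_singleton, not_or] at hy
  obtain ⟨hya, hyb, hyp, hyq, hyw⟩ := hy
  simp only [disjoint_insert_left, disjoint_singleton_left, mem_insert, mem_singleton,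
    not_or] at hab
  have hpq' : p ≠ q := by rintro rfl; exact hσ p hpq
  have hqw' : q ≠ w := by rintro rfl; exact hσ q hqw
  have hwp' : w ≠ p := by rintro rfl; exact hσ w hwp
  obtain ⟨⟨hpa, hpb⟩, ⟨hqa, hqb⟩, hwa, hwb⟩ := hab
  -- swapping `w` with the fresh `y` opens the triangle without creating a match
  have h0₁ : matchSet i j (σ * swap w y) = ∅ :=
    matchSet_mul_swap_eq_empty h0 (fun h => hyp (hwp.right_unique hi h).symm)
      (fun h => hyq (h.left_unique hj hqw))
  have hc₁ : (matchSet i j (σ * swap w y * swap q y)).card = 1 := by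
    rw [matchSet_mul_swap_eq_singleton h0₁ (by rwa [wants_mul, swap_apply_right]), card_singleton]
    rw [wants_mul, swap_apply_of_ne_of_ne hqw' (Ne.symm hyq)]
    exact fun h => hyp (h.left_unique hj hpq)
  have hc₂ : (matchSet i j (σ * swap w y * swap w p)).card = 1 := by
    rw [matchSet_mul_swap_eq_singleton h0₁
      (by rwa [wants_mul, swap_apply_of_ne_of_ne (Ne.symm hwp') (Ne.symm hyp)]), card_singleton]
    rw [wants_mul, swap_apply_left]
    exact fun h => hyq (hpq.right_unique hi h).symm
  refine sub_mem_spanS₁₂_of_sub_mem_mul hi h0 hτ (γ := swap p q) (δ := swap w y)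
    (disjoint_swap_swap_of_ne ?_ ?_ ?_ ?_) (disjoint_swap_swap_of_ne ?_ ?_ ?_ ?_)
    (disjoint_swap_swap_of_ne ?_ ?_ ?_ ?_) (card_matchSet_mul_swap_mem_Icc h0 hpq) h0₁
    fun hτ₁ => sub_mem_spanS₁₂_of_card_eq_one hi h0₁ hτ₁ (disjoint_swap_swap_of_ne ?_ ?_ ?_ ?_)
      (disjoint_swap_swap_of_ne ?_ ?_ ?_ ?_) (disjoint_swap_swap_of_ne ?_ ?_ ?_ ?_) hc₁ hc₂
  all_goals first | assumption | exact Ne.symm ‹_›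

theorem sub_mem_spanS₁₂_of_partnered (hn : 7 ≤ n) {c d e f : Fin n}
    (hcd : Wants i j σ c d) (hdc : Wants i j σ d c) (hef : Wants i j σ e f)
    (hfe : Wants i j σ f e) (hce : c ≠ e) (hce' : ¬ Wants i j σ c e) (hec : ¬ Wants i j σ e c)
    (hcd_ab : Disjoint ({c, d} : Finset (Fin n)) {a, b})
    (hef_ab : Disjoint ({e, f} : Finset (Fin n)) {a, b}) :
    permMat2 σ - permMat2 (σ * swap a b) ∈ spanS₁₂ i j := by
  obtain ⟨hcd', hef', hcf, hde, hdf⟩ := ne_of_not_adjacent hj h0 hcd hef hce hce' hec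
  obtain ⟨z, -, hz⟩ := exists_mem_notMem_of_card_lt_card (s := {a, b, c, d, e, f}) (t := univ)
    (by rw [card_univ, Fintype.card_fin]; exact card_le_six.trans_lt (by omega))
  simp only [mem_insert, mem_singleton, not_or] at hz
  obtain ⟨hza, hzb, hzc, hzd, hze, hzf⟩ := hz
  simp only [disjoint_insert_left, disjoint_singleton_left, mem_insert, mem_singleton,
    not_or] at hcd_ab hef_ab
  obtain ⟨⟨hca, hcb⟩, hda, hdb⟩ := hcd_ab
  obtain ⟨⟨hea, heb⟩, hfa, hfb⟩ := hef_ab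
  -- swapping `d` with the fresh `z` breaks the 2-cycle `c ⇄ d` without creating a match
  have h0₁ : matchSet i j (σ * swap d z) = ∅ :=
    matchSet_mul_swap_eq_empty h0 (fun h => hzc (hdc.right_unique hi h).symm)
      (fun h => hzc (h.left_unique hj hcd))
  have hc₁ : (matchSet i j (σ * swap d z * swap c z)).card = 1 := by
    rw [matchSet_mul_swap_eq_singleton h0₁ (by rwa [wants_mul, swap_apply_right]),
      card_singleton]
    rw [wants_mul, swap_apply_of_ne_of_ne hcd' (Ne.symm hzc)]
    exact fun h => hzd (h.left_unique hj hdc)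
  have hc₂ : (matchSet i j (σ * swap d z * (swap e f * swap f d))).card = 1 := by
    rw [matchSet_mul_cycle_eq_singleton hi hj h0₁
      (by rwa [wants_mul, swap_apply_of_ne_of_ne (Ne.symm hdf) (Ne.symm hzf)])
      (by rwa [wants_mul, swap_apply_of_ne_of_ne (Ne.symm hde) (Ne.symm hze)]) hde hdf,
      card_singleton]
  refine sub_mem_spanS₁₂_of_sub_mem_mul hi h0 hτ (γ := swap e f) (δ := swap d z)
    (disjoint_swap_swap_of_ne ?_ ?_ ?_ ?_) (disjoint_swap_swap_of_ne ?_ ?_ ?_ ?_)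
    (disjoint_swap_swap_of_ne ?_ ?_ ?_ ?_) (card_matchSet_mul_swap_mem_Icc h0 hef) h0₁
    fun hτ₁ => sub_mem_spanS₁₂_of_card_eq_one hi h0₁ hτ₁
      ((disjoint_swap_swap_of_ne ?_ ?_ ?_ ?_).mul_right (disjoint_swap_swap_of_ne ?_ ?_ ?_ ?_))
      (disjoint_swap_swap_of_ne ?_ ?_ ?_ ?_)
      ((disjoint_swap_swap_of_ne ?_ ?_ ?_ ?_).mul_left (disjoint_swap_swap_of_ne ?_ ?_ ?_ ?_))
      hc₁ hc₂
  all_goals assumption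

theorem sub_mem_spanS₁₂_of_not_partnered (hn : 7 ≤ n) {c d e f : Fin n}
    (hcd : Wants i j σ c d) (hef : Wants i j σ e f) (hfe : ¬ Wants i j σ f e) (hce : c ≠ e)
    (hce' : ¬ Wants i j σ c e) (hec : ¬ Wants i j σ e c)
    (hcd_ab : Disjoint ({c, d} : Finset (Fin n)) {a, b})
    (hef_ab : Disjoint ({e, f} : Finset (Fin n)) {a, b}) :
    permMat2 σ - permMat2 (σ * swap a b) ∈ spanS₁₂ i j := by
  obtain ⟨hcd', hef', hcf, hde, hdf⟩ := ne_of_not_adjacent hj h0 hcd hef hce hce' hec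
  simp only [disjoint_insert_left, disjoint_singleton_left, mem_insert, mem_singleton,
    not_or] at hcd_ab hef_ab
  obtain ⟨⟨hca, hcb⟩, hda, hdb⟩ := hcd_ab
  obtain ⟨⟨hea, heb⟩, hfa, hfb⟩ := hef_ab
  have hc₂ : (matchSet i j (σ * swap e f)).card = 1 := by
    rw [matchSet_mul_swap_eq_singleton h0 hef hfe, card_singleton]
  by_cases hdc : Wants i j σ d c
  · obtain ⟨z, -, hz⟩ := exists_mem_notMem_of_card_lt_card (s := {a, b, c, d, e, f}) (t := univ)
      (by rw [card_univ, Fintype.card_fin]; exact card_le_six.trans_lt (by omega))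
    simp only [mem_insert, mem_singleton, not_or] at hz
    obtain ⟨hza, hzb, hzc, hzd, hze, hzf⟩ := hz
    have hc₁ : (matchSet i j (σ * (swap c d * swap d z))).card = 1 := by
      rw [matchSet_mul_cycle_eq_singleton hi hj h0 hcd hdc hzc hzd, card_singleton]
    refine sub_mem_spanS₁₂_of_card_eq_one hi h0 hτ
      ((disjoint_swap_swap_of_ne ?_ ?_ ?_ ?_).mul_left (disjoint_swap_swap_of_ne ?_ ?_ ?_ ?_))
      ((disjoint_swap_swap_of_ne ?_ ?_ ?_ ?_).mul_left (disjoint_swap_swap_of_ne ?_ ?_ ?_ ?_))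
      (disjoint_swap_swap_of_ne ?_ ?_ ?_ ?_) hc₁ hc₂
    all_goals assumption
  · have hc₁ : (matchSet i j (σ * swap c d)).card = 1 := by
      rw [matchSet_mul_swap_eq_singleton h0 hcd hdc, card_singleton]
    refine sub_mem_spanS₁₂_of_card_eq_one hi h0 hτ (disjoint_swap_swap_of_ne ?_ ?_ ?_ ?_)
      (disjoint_swap_swap_of_ne ?_ ?_ ?_ ?_) (disjoint_swap_swap_of_ne ?_ ?_ ?_ ?_) hc₁ hc₂
    all_goals assumption

theorem sub_mem_spanS₁₂_of_not_adjacent (hn : 7 ≤ n) {c d e f : Fin n}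
    (hcd : Wants i j σ c d) (hef : Wants i j σ e f) (hce : c ≠ e) (hce' : ¬ Wants i j σ c e)
    (hec : ¬ Wants i j σ e c) (hcd_ab : Disjoint ({c, d} : Finset (Fin n)) {a, b})
    (hef_ab : Disjoint ({e, f} : Finset (Fin n)) {a, b}) :
    permMat2 σ - permMat2 (σ * swap a b) ∈ spanS₁₂ i j := by
  by_cases hfe : Wants i j σ f e
  · by_cases hdc : Wants i j σ d c
    · exact sub_mem_spanS₁₂_of_partnered hi hj h0 hτ hn hcd hdc hef hfe hce hce' hec hcd_ab
        hef_ab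
    · exact sub_mem_spanS₁₂_of_not_partnered hi hj h0 hτ hn hef hcd hdc hce.symm hec hce'
        hef_ab hcd_ab
  · exact sub_mem_spanS₁₂_of_not_partnered hi hj h0 hτ hn hcd hef hfe hce hce' hec hcd_ab hef_ab

theorem sub_mem_spanS₁₂_of_three (hn : 7 ≤ n) {p q w p' q' w' : Fin n}
    (hp : Wants i j σ p p') (hq : Wants i j σ q q') (hw : Wants i j σ w w')
    (hpq : p ≠ q) (hpw : p ≠ w) (hqw : q ≠ w) (hp_ab : Disjoint ({p, p'} : Finset (Fin n)) {a, b})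
    (hq_ab : Disjoint ({q, q'} : Finset (Fin n)) {a, b})
    (hw_ab : Disjoint ({w, w'} : Finset (Fin n)) {a, b}) :
    permMat2 σ - permMat2 (σ * swap a b) ∈ spanS₁₂ i j := by
  by_cases Apq : Wants i j σ p q ∨ Wants i j σ q p
  swap
  · exact sub_mem_spanS₁₂_of_not_adjacent hi hj h0 hτ hn hp hq hpq (not_or.1 Apq).1
      (not_or.1 Apq).2 hp_ab hq_ab
  by_cases Apw : Wants i j σ p w ∨ Wants i j σ w p
  swap
  · exact sub_mem_spanS₁₂_of_not_adjacent hi hj h0 hτ hn hp hw hpw (not_or.1 Apw).1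
      (not_or.1 Apw).2 hp_ab hw_ab
  by_cases Aqw : Wants i j σ q w ∨ Wants i j σ w q
  swap
  · exact sub_mem_spanS₁₂_of_not_adjacent hi hj h0 hτ hn hq hw hqw (not_or.1 Aqw).1
      (not_or.1 Aqw).2 hq_ab hw_ab
  have hab : Disjoint ({p, q, w} : Finset (Fin n)) {a, b} := by
    simp only [disjoint_insert_left, disjoint_singleton_left] at hp_ab hq_ab hw_ab ⊢
    exact ⟨hp_ab.1, hq_ab.1, hw_ab.1⟩
  rcases Apq with hpq' | hqp
  · have hwp : Wants i j σ w p := Apw.resolve_left fun h => hqw (hpq'.right_unique hi h)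
    have hqw' : Wants i j σ q w := Aqw.resolve_right fun h => hpq (h.right_unique hi hwp).symm
    exact sub_mem_spanS₁₂_of_triangle hi hj h0 hτ (by omega) hpq' hqw' hwp hab
  · have hpw' : Wants i j σ p w := Apw.resolve_right fun h => hqw (hqp.left_unique hj h)
    have hwq : Wants i j σ w q := Aqw.resolve_left fun h => hpw (h.right_unique hi hqp).symm
    exact sub_mem_spanS₁₂_of_triangle hi hj h0 hτ (by omega) hpw' hwq hqp
      (by rwa [pair_comm q w] at hab)

end Cases

end PermMat2

open PermMat2

theorem stmt7_general {n m : ℕ} (hm : 7 ≤ m) (hn : 7 ≤ n)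
    (i j : Fin m → Fin n) (hi : Function.Injective i) (hj : Function.Injective j)
    (σ σ' : Equiv.Perm (Fin n)) (hσ : σ ∈ Sk i j 0) (hσ' : σ' ∈ Sk i j 0)
    (htrans : ∃ a b : Fin n, a ≠ b ∧ σ' = σ * Equiv.swap a b) :
    permMat2 σ - permMat2 σ' ∈
      Submodule.span ℝ (permMat2 '' (Sk i j 1 ∪ Sk i j 2)) := by
  obtain ⟨a, b, -, rfl⟩ := htrans
  have h0 : matchSet i j σ = ∅ := card_eq_zero.1 ((mem_Sk_iff hi).1 hσ)
  have hτ : matchSet i j (σ * swap a b) = ∅ := card_eq_zero.1 ((mem_Sk_iff hi).1 hσ')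
  have hgood : 2 < (univ.filter fun r =>
      Disjoint ({i r, σ.symm (j r)} : Finset (Fin n)) {a, b}).card := by
    have := le_card_filter_disjoint_add (g := fun r => σ.symm (j r)) hi
      (σ.symm.injective.comp hj) {a, b}
    have := card_le_two (a := a) (b := b)
    omega
  obtain ⟨r, hr, s, hs, t, ht, hrs, hrt, hst⟩ := two_lt_card.1 hgood
  simp only [mem_filter, mem_univ, true_and] at hr hs ht
  have wants (u : Fin m) : Wants i j σ (i u) (σ.symm (j u)) := ⟨u, rfl, σ.apply_symm_apply _⟩
  exact sub_mem_spanS₁₂_of_three hi hj h0 hτ hn (wants r) (wants s) (wants t)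
    (hi.ne hrs) (hi.ne hrt) (hi.ne hst) hr hs ht

theorem stmt7 {n m : ℕ} (hmn : m ≤ n) (hm : 7 ≤ m) (hn : 7 ≤ n)
    (i j : Fin m → Fin n) (hi : Function.Injective i) (hj : Function.Injective j)
    (σ σ' : Equiv.Perm (Fin n)) (hσ : σ ∈ Sk i j 0) (hσ' : σ' ∈ Sk i j 0)
    (htrans : ∃ a b : Fin n, a ≠ b ∧ σ' = σ * Equiv.swap a b) :
    permMat2 σ - permMat2 σ' ∈
      Submodule.span ℝ (permMat2 '' (Sk i j 1 ∪ Sk i j 2)) :=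
  stmt7_general hm hn i j hi hj σ σ' hσ hσ' htrans
end

section
/- Let P, Q ⊆ [n] and let β be an integer. Let σ be a permutation of [n] and let q = #{(i,j) ∈ P×Q : σ(i) = j}. Then, as real numbers, β(β−1)/2 − (β−1)·∑_{(i,j)∈P×Q} P^[2]_σ((i,j),(i,j)) + ∑_{(i,j),(k,l)∈P×Q, i<k} P^[2]_σ((i,j),(k,l)) = (q − β)(q − β + 1)/2. In other words, the slack of the QAP2 inequality (β−1)∑_{(i,j)∈P×Q} Y((i,j),(i,j)) − ∑_{(i,j),(k,l)∈P×Q, i<k} Y((i,j),(k,l)) ≤ (β²−β)/2 at the vertex P^[2]_σ equals the binomial coefficient binom(q − (β−1), 2). -/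
open Finset

theorem Set.injOn_fst_graph {α β : Type*} (f : α → β) :
    Set.InjOn Prod.fst {p : α × β | f p.1 = p.2} := by
  rintro ⟨a, b⟩ (hab : f a = b) ⟨a', b'⟩ (hab' : f a' = b') (rfl : a = a')
  rw [← hab, ← hab']

theorem Finset.card_product_filter_fst_lt {α β : Type*} [LinearOrder α]
    {s : Finset (α × β)} (hs : Set.InjOn Prod.fst (s : Set (α × β))) :
    #{x ∈ s ×ˢ s | x.1.1 < x.2.1} = (#s).choose 2 := by
  rw [← card_image_of_injOn hs, ← card_product_filter_lt, ← prodMap_image_product,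
    filter_image]
  refine (card_image_of_injOn ((hs.prodMap hs).mono fun _ hx => ?_)).symm
  simpa using (mem_filter.1 hx).1

section permMat2

variable {n : ℕ} (σ : Equiv.Perm (Fin n))

theorem permMat2_eq_ite (p r : Fin n × Fin n) :
    permMat2 σ p r = if σ p.1 = p.2 ∧ σ r.1 = r.2 then 1 else 0 := by
  rw [permMat2, ite_zero_mul_ite_zero, one_mul]

theorem sum_permMat2_diag (s : Finset (Fin n × Fin n)) :
    ∑ p ∈ s, permMat2 σ p p = #{p ∈ s | σ p.1 = p.2} := by
  simp only [permMat2_eq_ite, and_self, sum_boole]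

theorem sum_sum_permMat2_fst_lt (s : Finset (Fin n × Fin n)) :
    ∑ p ∈ s, ∑ r ∈ s, (if p.1 < r.1 then permMat2 σ p r else 0)
      = ((#{p ∈ s | σ p.1 = p.2}).choose 2 : ℝ) := by
  have hs : Set.InjOn Prod.fst (({p ∈ s | σ p.1 = p.2} : Finset _) : Set (Fin n × Fin n)) :=
    (Set.injOn_fst_graph σ).mono fun p hp => (mem_filter.1 hp).2
  rw [← card_product_filter_fst_lt hs, ← filter_product, filter_filter, natCast_card_filter,
    sum_product]
  refine sum_congr rfl fun p _ => sum_congr rfl fun r _ => ?_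
  rw [permMat2_eq_ite, ← ite_and]
  exact if_congr and_comm rfl rfl

end permMat2

theorem stmt11 {n : ℕ} (P Q : Finset (Fin n)) (β : ℤ)
    (σ : Equiv.Perm (Fin n))
    (q : ℕ) (hq : q = ((P ×ˢ Q).filter (fun p : Fin n × Fin n => σ p.1 = p.2)).card) :
    (β : ℝ) * ((β : ℝ) - 1) / 2
      - ((β : ℝ) - 1) * (∑ p ∈ P ×ˢ Q, permMat2 σ p p)
      + (∑ p ∈ P ×ˢ Q, ∑ r ∈ P ×ˢ Q, if p.1 < r.1 then permMat2 σ p r else 0)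
    = ((q : ℝ) - (β : ℝ)) * ((q : ℝ) - (β : ℝ) + 1) / 2 := by
  rw [sum_permMat2_diag, sum_sum_permMat2_fst_lt, ← hq, Nat.cast_choose_two]
  ring
end

section
/- Let σ be a permutation of [n] and let q = #{r ∈ [m] : σ(i_r) = j_r}. Then, as real numbers, 1 − ∑_{r=1}^m P^[2]_σ((i_r,j_r),(i_r,j_r)) + ∑_{1≤r<s≤m} P^[2]_σ((i_r,j_r),(i_s,j_s)) = (q − 1)(q − 2)/2. In other words, the slack of the QAP4 inequality at the vertex P^[2]_σ equals the binomial coefficient binom(q − 1, 2). -/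
open Finset

/-! Every entry `P^[2]_σ((i_r,j_r),(i_s,j_s))` is the product `x_r x_s` of the 0/1 indicators
`x_r = [σ(i_r) = j_r]`, so the slack is `1 - ∑ x_r² + ∑_{r<s} x_r x_s`. Since `x_r² = x_r`, this is
`1 - q + ((∑ x)² - ∑ x²)/2 = 1 - q + (q² - q)/2 = (q - 1)(q - 2)/2`. -/

theorem sq_sum_eq_sum_sq_add_two_mul_sum_lt {ι R : Type*} [Fintype ι] [LinearOrder ι]
    [CommSemiring R] (x : ι → R) :
    (∑ r, x r) ^ 2 = ∑ r, x r ^ 2 + 2 * ∑ r, ∑ s, if r < s then x r * x s else 0 := by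
  have hsplit : ∀ r s, x r * x s = ((if r < s then x r * x s else 0) +
      (if s < r then x s * x r else 0)) + if r = s then x r ^ 2 else 0 := by
    intro r s
    rcases lt_trichotomy r s with h | rfl | h
    · simp [h, h.ne, h.not_gt]
    · simp [sq]
    · simp [h, h.ne', h.not_gt, mul_comm]
  rw [sq, sum_mul_sum, sum_congr rfl fun r _ => sum_congr rfl fun s _ => hsplit r s]
  simp only [sum_add_distrib, sum_ite_eq, mem_univ, if_true]
  rw [sum_comm (f := fun r s => if s < r then x s * x r else 0)]
  ring

theorem two_mul_sum_lt_mul_of_mul_self {ι R : Type*} [Fintype ι] [LinearOrder ι]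
    [CommRing R] (x : ι → R) (hx : ∀ r, x r * x r = x r) :
    2 * ∑ r, ∑ s, (if r < s then x r * x s else 0) = (∑ r, x r) * (∑ r, x r - 1) := by
  have h := sq_sum_eq_sum_sq_add_two_mul_sum_lt x
  simp only [sq, hx] at h
  linear_combination -h

theorem stmt13_general {n m : ℕ}
    (i j : Fin m → Fin n)
    (σ : Equiv.Perm (Fin n))
    (q : ℕ) (hq : q = (Finset.univ.filter (fun r : Fin m => σ (i r) = j r)).card) :
    1 - (∑ r : Fin m, permMat2 σ (i r, j r) (i r, j r))
      + (∑ r : Fin m, ∑ s : Fin m, if r < s then permMat2 σ (i r, j r) (i s, j s) else 0)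
    = ((q : ℝ) - 1) * ((q : ℝ) - 2) / 2 := by
  set x : Fin m → ℝ := fun r => if σ (i r) = j r then 1 else 0
  have hx : ∀ r, x r * x r = x r := fun r => by by_cases h : σ (i r) = j r <;> simp [x, h]
  have hsum : ∑ r, x r = q := by simp [x, hq, sum_boole]
  have hpairs := two_mul_sum_lt_mul_of_mul_self x hx
  change 1 - ∑ r, x r * x r + ∑ r, ∑ s, (if r < s then x r * x s else 0) = _
  rw [hsum] at hpairs
  simp only [hx, hsum]
  linear_combination hpairs / 2

theorem stmt13 {n m : ℕ} (hmn : m ≤ n)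
    (i j : Fin m → Fin n) (hi : Function.Injective i) (hj : Function.Injective j)
    (σ : Equiv.Perm (Fin n))
    (q : ℕ) (hq : q = (Finset.univ.filter (fun r : Fin m => σ (i r) = j r)).card) :
    1 - (∑ r : Fin m, permMat2 σ (i r, j r) (i r, j r))
      + (∑ r : Fin m, ∑ s : Fin m, if r < s then permMat2 σ (i r, j r) (i s, j s) else 0)
    = ((q : ℝ) - 1) * ((q : ℝ) - 2) / 2 :=
  stmt13_general i j σ q hq
end

section
/- Let G = (V,E) be a simple graph with vertex set V = [n], n ≥ 7, and let t ≥ 6 be a natural number. Define the real n²×n² matrix Y, indexed by pairs in [n]×[n], by: Y((i_1,j_1),(i_2,j_2)) = 1/t if (i_1,j_1) = (i_2,j_2); Y((i_1,j_1),(i_2,j_2)) = 0 if {i_1,i_2} ∈ E; Y((i_1,j_1),(i_2,j_2)) = n/6 if i_1 ≠ i_2 and {i_1,i_2} ∉ E; and Y((i_1,j_1),(i_2,j_2)) = 0 otherwise. Then Y violates some QAP4 inequality — that is, there exist m with 7 ≤ m ≤ n, pairwise distinct i_1,…,i_m ∈ [n] and pairwise distinct j_1,…,j_m ∈ [n] such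 that ∑_{r=1}^m Y((i_r,j_r),(i_r,j_r)) − ∑_{1≤r<s≤m} Y((i_r,j_r),(i_s,j_s)) > 1 — if and only if G contains a clique of size at least t+1. -/
open Finset Function

/-!
On an injective row assignment `i`, the diagonal contributes `m / t`, while every pair of rows
`r < s` contributes `0` if `i r, i s` are adjacent and `n / 6` otherwise. If the rows form a clique
the left-hand side is `m / t`, which exceeds `1` exactly when `m ≥ t + 1`. Otherwise a single
non-edge already costs `n / 6 ≥ m / t` (as `m ≤ n` and `t ≥ 6`), so the inequality is not violated.
-/

section CliqueMatrix

variable {V W : Type*} [DecidableEq V] [DecidableEq W] (G : SimpleGraph V) [DecidableRel G.Adj]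

def cliqueMatrix (a b : ℝ) (p q : V × W) : ℝ :=
  if p = q then a else if G.Adj p.1 q.1 then 0 else if p.1 ≠ q.1 then b else 0

def qap4Lhs {m : ℕ} (Y : V × W → V × W → ℝ) (i : Fin m → V) (j : Fin m → W) : ℝ :=
  ∑ r, Y (i r, j r) (i r, j r) - ∑ r, ∑ s, if r < s then Y (i r, j r) (i s, j s) else 0

variable {G}

@[simp]
lemma cliqueMatrix_self (a b : ℝ) (p : V × W) : cliqueMatrix G a b p p = a := if_pos rfl

lemma cliqueMatrix_of_ne {a b : ℝ} {v v' : V} (h : v ≠ v') (w w' : W) :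
    cliqueMatrix G a b (v, w) (v', w') = if G.Adj v v' then 0 else b := by
  have hpq : (v, w) ≠ (v', w') := fun hpq => h (congrArg Prod.fst hpq)
  simp only [cliqueMatrix, if_neg hpq, if_pos h]

variable {m : ℕ} {i : Fin m → V}

lemma qap4Lhs_cliqueMatrix_of_pairwise_adj (a b : ℝ) (j : Fin m → W)
    (hi : Injective i) (hclique : Pairwise (G.Adj on i)) :
    qap4Lhs (cliqueMatrix G a b) i j = m * a := by
  have hoff : ∀ r s : Fin m, r ≠ s → cliqueMatrix G a b (i r, j r) (i s, j s) = 0 :=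
    fun r s hrs => by rw [cliqueMatrix_of_ne (hi.ne hrs), if_pos (hclique hrs)]
  simp [qap4Lhs, Finset.sum_eq_zero fun r _ => Finset.sum_eq_zero fun s _ =>
    ite_eq_right_iff.mpr fun hrs : r < s => hoff r s hrs.ne]

lemma qap4Lhs_cliqueMatrix_le_of_not_pairwise_adj {b : ℝ} (hb : 0 ≤ b) (a : ℝ) (j : Fin m → W)
    (hi : Injective i) (hclique : ¬ Pairwise (G.Adj on i)) :
    qap4Lhs (cliqueMatrix G a b) i j ≤ m * a - b := by
  set term := fun r s : Fin m => if r < s then cliqueMatrix G a b (i r, j r) (i s, j s) else 0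
  have hterm : ∀ r s, term r s = if r < s then (if G.Adj (i r) (i s) then 0 else b) else 0 :=
    fun r s => by
      by_cases hrs : r < s
      · simp only [term, if_pos hrs, cliqueMatrix_of_ne (hi.ne hrs.ne)]
      · simp only [term, if_neg hrs]
  have hnonneg : ∀ r s, 0 ≤ term r s := fun r s => by
    rw [hterm]; split_ifs <;> simp [hb]
  obtain ⟨r, s, hrs, hnadj⟩ : ∃ r s, r < s ∧ ¬ G.Adj (i r) (i s) := by
    have : Std.Symm G.Adj := ⟨fun _ _ h => h.symm⟩
    simpa [Std.Symm.pairwise_on] using hclique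
  have hb_le : b ≤ ∑ r, ∑ s, term r s := calc
    b = term r s := by rw [hterm, if_pos hrs, if_neg hnadj]
    _ ≤ ∑ s, term r s := Finset.single_le_sum (fun s _ => hnonneg r s) (mem_univ s)
    _ ≤ ∑ r, ∑ s, term r s :=
      Finset.single_le_sum (fun r _ => Finset.sum_nonneg fun s _ => hnonneg r s) (mem_univ r)
  simp only [qap4Lhs, cliqueMatrix_self, sum_const, card_univ, Fintype.card_fin, nsmul_eq_mul]
  linarith

end CliqueMatrix

theorem stmt14_general {n : ℕ} (G : SimpleGraph (Fin n)) [DecidableRel G.Adj]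
    (t : ℕ) (ht : 6 ≤ t)
    (Y : (Fin n × Fin n) → (Fin n × Fin n) → ℝ)
    (hY : ∀ p q : Fin n × Fin n,
      Y p q = if p = q then 1 / (t : ℝ)
        else if G.Adj p.1 q.1 then 0
        else if p.1 ≠ q.1 then (n : ℝ) / 6
        else 0) :
    (∃ m : ℕ, 7 ≤ m ∧ m ≤ n ∧
      ∃ i j : Fin m → Fin n, Function.Injective i ∧ Function.Injective j ∧
        1 < ∑ r : Fin m, Y (i r, j r) (i r, j r)
            - ∑ r : Fin m, ∑ s : Fin m, (if r < s then Y (i r, j r) (i s, j s) else 0))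
    ↔ ∃ s : Finset (Fin n), t + 1 ≤ s.card ∧ G.IsClique (s : Set (Fin n)) := by
  obtain rfl : Y = cliqueMatrix G (1 / t) (n / 6) := funext fun p => funext fun q => hY p q
  have ht0 : (0 : ℝ) < t := by positivity
  constructor
  · rintro ⟨m, -, hmn, i, j, hi, -, hviol⟩
    change 1 < qap4Lhs _ i j at hviol
    by_cases hclique : Pairwise (G.Adj on i)
    · rw [qap4Lhs_cliqueMatrix_of_pairwise_adj _ _ _ hi hclique, mul_one_div, one_lt_div ht0]
        at hviol
      refine ⟨univ.image i, ?_, ?_⟩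
      · rw [card_image_of_injective _ hi, card_univ, Fintype.card_fin]
        exact_mod_cast hviol
      · simpa using hclique.range_pairwise
    · have hle := qap4Lhs_cliqueMatrix_le_of_not_pairwise_adj (b := n / 6) (by positivity) (1 / t) j hi
        hclique
      have hmt : (m : ℝ) * (1 / t) ≤ n / 6 := by
        rw [mul_one_div, div_le_div_iff₀ ht0 (by norm_num)]
        exact_mod_cast Nat.mul_le_mul hmn ht
      linarith
  · rintro ⟨s, hcard, hclique⟩
    let i : Fin s.card → Fin n := fun r => s.equivFin.symm r
    have hi : Injective i := Subtype.val_injective.comp s.equivFin.symm.injective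
    refine ⟨s.card, by omega, by simpa using card_le_univ s, i, i, hi, hi, ?_⟩
    change 1 < qap4Lhs _ i i
    rw [qap4Lhs_cliqueMatrix_of_pairwise_adj _ _ _ hi
      fun r r' hrr' => hclique (s.equivFin.symm r).2 (s.equivFin.symm r').2 (hi.ne hrr'),
      mul_one_div, one_lt_div ht0]
    exact_mod_cast hcard

theorem stmt14 {n : ℕ} (hn : 7 ≤ n) (G : SimpleGraph (Fin n)) [DecidableRel G.Adj]
    (t : ℕ) (ht : 6 ≤ t)
    (Y : (Fin n × Fin n) → (Fin n × Fin n) → ℝ)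
    (hY : ∀ p q : Fin n × Fin n,
      Y p q = if p = q then 1 / (t : ℝ)
        else if G.Adj p.1 q.1 then 0
        else if p.1 ≠ q.1 then (n : ℝ) / 6
        else 0) :
    (∃ m : ℕ, 7 ≤ m ∧ m ≤ n ∧
      ∃ i j : Fin m → Fin n, Function.Injective i ∧ Function.Injective j ∧
        1 < ∑ r : Fin m, Y (i r, j r) (i r, j r)
            - ∑ r : Fin m, ∑ s : Fin m, (if r < s then Y (i r, j r) (i s, j s) else 0))
    ↔ ∃ s : Finset (Fin n), t + 1 ≤ s.card ∧ G.IsClique (s : Set (Fin n)) :=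
  stmt14_general G t ht Y hY
end

section
/- Let G = (V,E) be a simple graph with vertex set V = [n], and let t be a natural number with 1 ≤ t ≤ n−4. Define the real n²×n² matrix Y, indexed by pairs in [n]×[n], by: Y((i_1,j_1),(i_2,j_2)) = 0 if i_1 ≠ i_2 and {i_1,i_2} ∈ E; Y((i_1,j_1),(i_2,j_2)) = n² if i_1 ≠ i_2 and {i_1,i_2} ∉ E; Y((i_1,j_1),(i_2,j_2)) = 1/t if i_1 = i_2 and j_1 = j_2 = 1; and Y((i_1,j_1),(i_2,j_2)) = 0 otherwise. Suppose there exist sets P, Q ⊆ [n] and an integer β ≥ 2 with β+1 ≤ |P| ≤ n−3, β+1 ≤ |Q| ≤ n−3 and |P|+|Q| ≤ n−3+β, such that (β−1)·∑_{(i,j)∈P×Q} Y((i,j),(i,j)) − ∑_{(i,j),(k,l)∈P×Q, i<k} Y((i,j),(k,l)) > (β²−β)/2. Then G contains a clique with more than t vertices. -/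
/-!
Write `D` for the diagonal sum and `O` for the sum over pairs `i < k` in the QAP2 inequality.
All entries of `Y` are nonnegative, so a violation forces `(β - 1) D > β (β - 1) / 2`, i.e.
`D > β / 2 ≥ 1`. The diagonal of `Y` is `1 / t` on the column `j = 1` and `0` elsewhere, so
`D ≤ |P| / t`, whence `|P| > t`. If two vertices `i < k` of `P` were non-adjacent, the single
entry `Y((i,j),(k,l)) = n²` would already give `O ≥ n²`, while `D ≤ |P| ≤ n`; then
`(β - 1) D - O ≤ (β - 1) n - n²` lies below `β (β - 1) / 2`. Hence `P` is a clique.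
-/

open Finset

namespace QAP2

section Sums

variable {α ι κ : Type*}

def diagSum (Y : α → α → ℝ) (S : Finset α) : ℝ :=
  ∑ p ∈ S, Y p p

variable [LinearOrder ι]

def upperSum (Y : ι × κ → ι × κ → ℝ) (S : Finset (ι × κ)) : ℝ :=
  ∑ p ∈ S, ∑ r ∈ S, if p.1 < r.1 then Y p r else 0

def lhs (Y : ι × κ → ι × κ → ℝ) (P : Finset ι) (Q : Finset κ) (b : ℝ) : ℝ :=
  (b - 1) * diagSum Y (P ×ˢ Q) - upperSum Y (P ×ˢ Q)

variable {Y : ι × κ → ι × κ → ℝ}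

theorem upperSum_nonneg (hY : ∀ p r, 0 ≤ Y p r) (S : Finset (ι × κ)) : 0 ≤ upperSum Y S :=
  sum_nonneg fun p _ => sum_nonneg fun r _ => by split_ifs <;> simp [hY]

theorem le_upperSum (hY : ∀ p r, 0 ≤ Y p r) {S : Finset (ι × κ)} {p r : ι × κ}
    (hp : p ∈ S) (hr : r ∈ S) (hpr : p.1 < r.1) : Y p r ≤ upperSum Y S := by
  have hnonneg : ∀ p r, 0 ≤ if p.1 < r.1 then Y p r else 0 := fun p r => by
    split_ifs <;> simp [hY]
  calc Y p r = if p.1 < r.1 then Y p r else 0 := (if_pos hpr).symm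
    _ ≤ ∑ r ∈ S, if p.1 < r.1 then Y p r else 0 :=
      single_le_sum (fun r _ => hnonneg p r) hr
    _ ≤ upperSum Y S := single_le_sum (fun p _ => sum_nonneg fun r _ => hnonneg p r) hp

end Sums

theorem one_lt_of_violation {b D O : ℝ} (hb : 2 ≤ b) (hO : 0 ≤ O)
    (hviol : (b ^ 2 - b) / 2 < (b - 1) * D - O) : 1 < D := by
  nlinarith

/-- AM-GM: `(b - 1) m ≤ ((b - 1)² + m²) / 2`. -/
theorem lt_sq_of_violation {b D O m : ℝ} (hb : 1 ≤ b) (hD : D ≤ m)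
    (hviol : (b ^ 2 - b) / 2 < (b - 1) * D - O) : O < m ^ 2 := by
  nlinarith [mul_le_mul_of_nonneg_left hD (sub_nonneg.2 hb), sq_nonneg (b - 1 - m)]

variable {n : ℕ} (G : SimpleGraph (Fin n)) [DecidableRel G.Adj] (t : ℕ)

/-- `(p.2 : ℕ) = 0` encodes the column `j = 1` of `[n]`. -/
noncomputable def cliqueMatrix : Fin n × Fin n → Fin n × Fin n → ℝ := fun p q =>
  if G.Adj p.1 q.1 then 0
  else if p.1 ≠ q.1 then (n : ℝ) ^ 2
  else if p.2 = q.2 ∧ (p.2 : ℕ) = 0 then 1 / (t : ℝ)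
  else 0

variable {G t}

theorem cliqueMatrix_nonneg (p q : Fin n × Fin n) : 0 ≤ cliqueMatrix G t p q := by
  unfold cliqueMatrix
  split_ifs <;> positivity

theorem cliqueMatrix_of_not_adj {i k : Fin n} (hik : i ≠ k) (hadj : ¬ G.Adj i k) (j l : Fin n) :
    cliqueMatrix G t (i, j) (k, l) = (n : ℝ) ^ 2 := by
  simp [cliqueMatrix, hik, hadj]

theorem sum_cliqueMatrix_self_le (i : Fin n) (Q : Finset (Fin n)) :
    ∑ j ∈ Q, cliqueMatrix G t (i, j) (i, j) ≤ 1 / t := by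
  simp only [cliqueMatrix, G.irrefl, ne_eq, not_true_eq_false, true_and, if_false]
  rw [← sum_filter, sum_const, nsmul_eq_mul]
  have hcard : #(Q.filter fun j : Fin n => (j : ℕ) = 0) ≤ 1 :=
    card_le_one.2 fun a ha b hb => Fin.ext (by simp_all)
  calc (#(Q.filter fun j : Fin n => (j : ℕ) = 0) : ℝ) * (1 / t) ≤ 1 * (1 / t) := by
        gcongr; exact_mod_cast hcard
    _ = 1 / t := one_mul _

theorem diagSum_cliqueMatrix_le (P Q : Finset (Fin n)) :
    diagSum (cliqueMatrix G t) (P ×ˢ Q) ≤ #P / t := by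
  calc diagSum (cliqueMatrix G t) (P ×ˢ Q)
      = ∑ i ∈ P, ∑ j ∈ Q, cliqueMatrix G t (i, j) (i, j) := sum_product _ _ _
    _ ≤ ∑ _i ∈ P, 1 / (t : ℝ) := sum_le_sum fun i _ => sum_cliqueMatrix_self_le i Q
    _ = #P / t := by rw [sum_const, nsmul_eq_mul, mul_one_div]

theorem lt_card_of_one_lt_diagSum {P Q : Finset (Fin n)}
    (hD : 1 < diagSum (cliqueMatrix G t) (P ×ˢ Q)) : t < #P := by
  have h := hD.trans_le (diagSum_cliqueMatrix_le P Q)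
  rcases one_lt_div_iff.1 h with ⟨-, hlt⟩ | ⟨hneg, -⟩
  · exact_mod_cast hlt
  · exact absurd hneg (Nat.cast_nonneg t).not_gt

theorem isClique_of_violation {P Q : Finset (Fin n)} {b : ℝ} (hb : 1 ≤ b)
    (hQ : Q.Nonempty) (hviol : (b ^ 2 - b) / 2 < lhs (cliqueMatrix G t) P Q b) :
    G.IsClique (P : Set (Fin n)) := by
  obtain ⟨j, hj⟩ := hQ
  have hD : diagSum (cliqueMatrix G t) (P ×ˢ Q) ≤ n :=
    calc diagSum (cliqueMatrix G t) (P ×ˢ Q) ≤ #P / t := diagSum_cliqueMatrix_le P Q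
      _ ≤ #P := by
        rw [div_eq_mul_inv]
        exact mul_le_of_le_one_right (Nat.cast_nonneg _) (Nat.cast_inv_le_one t)
      _ ≤ n := by exact_mod_cast card_le_univ P |>.trans_eq (Fintype.card_fin n)
  have hsep : ∀ i ∈ P, ∀ k ∈ P, i < k → G.Adj i k := by
    intro i hi k hk hik
    by_contra hadj
    refine (lt_sq_of_violation hb hD hviol).not_ge ?_
    rw [← cliqueMatrix_of_not_adj hik.ne hadj j j]
    exact le_upperSum cliqueMatrix_nonneg (mk_mem_product hi hj) (mk_mem_product hk hj) hik
  intro i hi k hk hne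
  rcases hne.lt_or_gt with hik | hki
  · exact hsep i hi k hk hik
  · exact (hsep k hk i hi hki).symm

end QAP2

open QAP2 in
theorem stmt15_general {n : ℕ} (G : SimpleGraph (Fin n)) [DecidableRel G.Adj]
    (t : ℕ)
    (Y : (Fin n × Fin n) → (Fin n × Fin n) → ℝ)
    (hY : ∀ p q : Fin n × Fin n,
      Y p q = if G.Adj p.1 q.1 then 0
        else if p.1 ≠ q.1 then (n : ℝ) ^ 2
        else if p.2 = q.2 ∧ (p.2 : ℕ) = 0 then 1 / (t : ℝ)
        else 0)
    (P Q : Finset (Fin n)) (β : ℤ) (hβ : 2 ≤ β)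
    (hviol : ((β : ℝ) ^ 2 - (β : ℝ)) / 2 <
      ((β : ℝ) - 1) * (∑ p ∈ P ×ˢ Q, Y p p)
        - ∑ p ∈ P ×ˢ Q, ∑ r ∈ P ×ˢ Q, (if p.1 < r.1 then Y p r else 0)) :
    ∃ s : Finset (Fin n), t < s.card ∧ G.IsClique (s : Set (Fin n)) := by
  obtain rfl : Y = cliqueMatrix G t := funext₂ hY
  replace hviol : ((β : ℝ) ^ 2 - β) / 2 < lhs (cliqueMatrix G t) P Q β := hviol
  have hb : (2 : ℝ) ≤ β := by exact_mod_cast hβ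
  have hD : 1 < diagSum (cliqueMatrix G t) (P ×ˢ Q) :=
    one_lt_of_violation hb (upperSum_nonneg cliqueMatrix_nonneg _) hviol
  have hQ : Q.Nonempty := (nonempty_of_sum_ne_zero (zero_lt_one.trans hD).ne').snd
  exact ⟨P, lt_card_of_one_lt_diagSum hD, isClique_of_violation (by linarith) hQ hviol⟩

theorem stmt15 {n : ℕ} (G : SimpleGraph (Fin n)) [DecidableRel G.Adj]
    (t : ℕ) (ht1 : 1 ≤ t) (htn : t ≤ n - 4)
    (Y : (Fin n × Fin n) → (Fin n × Fin n) → ℝ)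
    (hY : ∀ p q : Fin n × Fin n,
      Y p q = if G.Adj p.1 q.1 then 0
        else if p.1 ≠ q.1 then (n : ℝ) ^ 2
        else if p.2 = q.2 ∧ (p.2 : ℕ) = 0 then 1 / (t : ℝ)
        else 0)
    (P Q : Finset (Fin n)) (β : ℤ) (hβ : 2 ≤ β)
    (hP1 : β + 1 ≤ (P.card : ℤ)) (hP2 : (P.card : ℤ) ≤ (n : ℤ) - 3)
    (hQ1 : β + 1 ≤ (Q.card : ℤ)) (hQ2 : (Q.card : ℤ) ≤ (n : ℤ) - 3)
    (hPQ : (P.card : ℤ) + (Q.card : ℤ) ≤ (n : ℤ) - 3 + β)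
    (hviol : ((β : ℝ) ^ 2 - (β : ℝ)) / 2 <
      ((β : ℝ) - 1) * (∑ p ∈ P ×ˢ Q, Y p p)
        - ∑ p ∈ P ×ˢ Q, ∑ r ∈ P ×ˢ Q, (if p.1 < r.1 then Y p r else 0)) :
    ∃ s : Finset (Fin n), t < s.card ∧ G.IsClique (s : Set (Fin n)) :=
  stmt15_general G t Y hY P Q β hβ hviol
end
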